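/- arXiv:1503.06611 — 11 statements merged into one kernel-verified Lean document; each statement's English description precedes it below -/
import Mathlib

section
/- Let T be a bounded linear operator on a complex Banach space X. If T has finite descent (there exists p ≥ 0 with R(T^p) = R(T^{p+1})) and T is pseudo B-Weyl, then T is B-Weyl. -/
open Filter Set ContinuousLinearMap

noncomputable section

namespace PBW

variable {X : Type*} [NormedAddCommGroup X] [NormedSpace ℂ X]

/-- Restriction of an operator to an invariant subspace, as a continuous linear map. -/
def restrictOp (T : X →L[ℂ] X) (U : Submodule ℂ X) (h : ∀ x ∈ U, T x ∈ U) : U →L[ℂ] U :=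
  ⟨(T : X →ₗ[ℂ] X).restrict h,
    (T.continuous.comp continuous_subtype_val).subtype_mk _⟩

/-- A quasi-nilpotent operator: its spectrum is contained in `{0}`. -/
def IsQuasinilpotentOp {Z : Type*} [NormedAddCommGroup Z] [NormedSpace ℂ Z]
    (T : Z →L[ℂ] Z) : Prop := spectrum ℂ T ⊆ {0}

/-- A Weyl operator : Fredholm of index zero. -/
def IsWeylOp {Z : Type*} [NormedAddCommGroup Z] [NormedSpace ℂ Z]
    (T : Z →L[ℂ] Z) : Prop :=
  FiniteDimensional ℂ (LinearMap.ker (T : Z →ₗ[ℂ] Z)) ∧ IsClosed (LinearMap.range (T : Z →ₗ[ℂ] Z) : Set Z) ∧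
    FiniteDimensional ℂ (Z ⧸ LinearMap.range (T : Z →ₗ[ℂ] Z)) ∧
    Module.finrank ℂ (LinearMap.ker (T : Z →ₗ[ℂ] Z)) = Module.finrank ℂ (Z ⧸ LinearMap.range (T : Z →ₗ[ℂ] Z))

/-- A pseudo B-Weyl operator: direct sum of a Weyl operator and a quasi-nilpotent one. -/
def IsPseudoBWeyl (T : X →L[ℂ] X) : Prop :=
  ∃ (X₁ X₂ : Submodule ℂ X) (h₁ : ∀ x ∈ X₁, T x ∈ X₁) (h₂ : ∀ x ∈ X₂, T x ∈ X₂),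
    IsClosed (X₁ : Set X) ∧ IsClosed (X₂ : Set X) ∧ IsCompl X₁ X₂ ∧
    IsWeylOp (restrictOp T X₁ h₁) ∧ IsQuasinilpotentOp (restrictOp T X₂ h₂)

/-- A B-Weyl operator: direct sum of a Weyl operator and a nilpotent one. -/
def IsBWeyl (T : X →L[ℂ] X) : Prop :=
  ∃ (X₁ X₂ : Submodule ℂ X) (h₁ : ∀ x ∈ X₁, T x ∈ X₁) (h₂ : ∀ x ∈ X₂, T x ∈ X₂),
    IsClosed (X₁ : Set X) ∧ IsClosed (X₂ : Set X) ∧ IsCompl X₁ X₂ ∧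
    IsWeylOp (restrictOp T X₁ h₁) ∧ IsNilpotent (restrictOp T X₂ h₂)

/-- The pseudo B-Weyl spectrum. -/
def pBWSpectrum (T : X →L[ℂ] X) : Set ℂ := {l | ¬ IsPseudoBWeyl (T - l • 1)}

/-- The generalized Drazin spectrum: accumulation points of the spectrum. -/
def gDSpectrum (T : X →L[ℂ] X) : Set ℂ := {l | AccPt l (𝓟 (spectrum ℂ T))}

/-- SVEP at a point. -/
def HasSVEPAt (T : X →L[ℂ] X) (l : ℂ) : Prop :=
  ∀ U : Set ℂ, IsOpen U → l ∈ U → ∀ f : ℂ → X, AnalyticOnNhd ℂ f U →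
    (∀ μ ∈ U, (T - μ • 1) (f μ) = 0) → ∀ μ ∈ U, f μ = 0

/-- The set where `T` fails SVEP. -/
def svepFail (T : X →L[ℂ] X) : Set ℂ := {l | ¬ HasSVEPAt T l}

/-- The Banach space adjoint (dual operator) of `T`. -/
def dualOp (T : X →L[ℂ] X) :
    StrongDual ℂ X →L[ℂ] StrongDual ℂ X :=
  (ContinuousLinearMap.compL ℂ X X ℂ).flip T

/-- The left spectrum. -/
def leftSpectrum (T : X →L[ℂ] X) : Set ℂ :=
  {l | ¬ ∃ S : X →L[ℂ] X, S * (T - l • 1) = 1}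

/-- The right spectrum. -/
def rightSpectrum (T : X →L[ℂ] X) : Set ℂ :=
  {l | ¬ ∃ S : X →L[ℂ] X, (T - l • 1) * S = 1}

/-- The left generalized Drazin spectrum. -/
def lgDSpectrum (T : X →L[ℂ] X) : Set ℂ := {l | AccPt l (𝓟 (leftSpectrum T))}

/-- The right generalized Drazin spectrum. -/
def rgDSpectrum (T : X →L[ℂ] X) : Set ℂ := {l | AccPt l (𝓟 (rightSpectrum T))}

variable {Y : Type*} [NormedAddCommGroup Y] [NormedSpace ℂ Y]

/-- The upper triangular operator matrix `M_C` on `X × Y`. -/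
def MC (A : X →L[ℂ] X) (B : Y →L[ℂ] Y) (C : Y →L[ℂ] X) : (X × Y) →L[ℂ] (X × Y) :=
  (A.comp (ContinuousLinearMap.fst ℂ X Y) + C.comp (ContinuousLinearMap.snd ℂ X Y)).prod
    (B.comp (ContinuousLinearMap.snd ℂ X Y))

/-! ### Auxiliary lemmas -/

lemma restrictOp_coe (T : X →L[ℂ] X) (U : Submodule ℂ X) (h : ∀ x ∈ U, T x ∈ U) (x : U) :
    (restrictOp T U h x : X) = T x := rfl

lemma restrictOp_pow_coe (T : X →L[ℂ] X) (U : Submodule ℂ X) (h : ∀ x ∈ U, T x ∈ U)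
    (n : ℕ) (x : U) : ((restrictOp T U h ^ n) x : X) = (T ^ n) x := by
  induction n generalizing x with
  | zero => simp
  | succ n ih =>
    have h1 : (restrictOp T U h ^ (n + 1)) x
        = (restrictOp T U h ^ n) (restrictOp T U h x) := by
      rw [pow_succ]; rfl
    have h2 : (T ^ (n + 1)) (x : X) = (T ^ n) (T x) := by
      rw [pow_succ]; rfl
    rw [h1, h2, ih (restrictOp T U h x), restrictOp_coe]

/-- Norm comparison for an operator on a quotient commuting with an operator downstairs. -/
lemma quot_norm_bound {Z : Type*} [NormedAddCommGroup Z] [NormedSpace ℂ Z]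
    (K : Submodule ℂ Z) (A : Z ⧸ K →ₗ[ℂ] Z ⧸ K) (B : Z →L[ℂ] Z)
    (hAB : ∀ x : Z, A (Submodule.Quotient.mk x) = Submodule.Quotient.mk (B x)) (x : Z ⧸ K) :
    ‖A x‖ ≤ ‖B‖ * ‖x‖ := by
  refine le_of_forall_pos_le_add fun ε hε => ?_
  have hden : (0:ℝ) < ‖B‖ + 1 := by positivity
  obtain ⟨m, rfl, hm⟩ := Submodule.Quotient.norm_mk_lt x (div_pos hε hden)
  calc ‖A (Submodule.Quotient.mk m)‖
      = ‖(Submodule.Quotient.mk (B m) : Z ⧸ K)‖ := by rw [hAB]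
    _ ≤ ‖B m‖ := Submodule.Quotient.norm_mk_le _ _
    _ ≤ ‖B‖ * ‖m‖ := B.le_opNorm m
    _ ≤ ‖B‖ * (‖(Submodule.Quotient.mk m : Z ⧸ K)‖ + ε / (‖B‖ + 1)) :=
        mul_le_mul_of_nonneg_left hm.le (norm_nonneg _)
    _ ≤ ‖B‖ * ‖(Submodule.Quotient.mk m : Z ⧸ K)‖ + ε := by
        rw [mul_add]
        have h1 : ‖B‖ * (ε / (‖B‖ + 1)) ≤ ε := by
          rw [mul_div_assoc']
          rw [div_le_iff₀ hden]
          nlinarith [norm_nonneg B, hε.le]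
        linarith

/-- A quasinilpotent operator with finite descent satisfies `Q ^ p = 0`. -/
lemma quasinilpotent_descent_pow_eq_zero {Z : Type*} [NormedAddCommGroup Z] [NormedSpace ℂ Z]
    [CompleteSpace Z] (Q : Z →L[ℂ] Z) (hq : IsQuasinilpotentOp Q) (p : ℕ)
    (hd : LinearMap.range ((Q ^ p : Z →L[ℂ] Z) : Z →ₗ[ℂ] Z) = LinearMap.range ((Q ^ (p + 1) : Z →L[ℂ] Z) : Z →ₗ[ℂ] Z)) : Q ^ p = 0 := by
  by_contra hne
  obtain ⟨x₀, hx₀⟩ : ∃ x, (Q ^ p) x ≠ 0 := by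
    by_contra hcon; push_neg at hcon
    exact hne (ContinuousLinearMap.ext fun x => by simp [hcon x])
  set K : Submodule ℂ Z := LinearMap.ker ((Q ^ p : Z →L[ℂ] Z) : Z →ₗ[ℂ] Z) with hK
  haveI hKc : IsClosed (K : Set Z) := ContinuousLinearMap.isClosed_ker (Q ^ p)
  -- Q maps K to K
  have hle : K ≤ K.comap (Q : Z →ₗ[ℂ] Z) := by
    intro z hz
    have hz' : (Q ^ p) z = 0 := hz
    have : (Q ^ p) (Q z) = Q ((Q ^ p) z) := by
      rw [← ContinuousLinearMap.comp_apply, ← ContinuousLinearMap.comp_apply,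
        ← ContinuousLinearMap.mul_def, ← ContinuousLinearMap.mul_def, ← pow_succ, ← pow_succ']
    simp only [Submodule.mem_comap]
    show (Q ^ p) (Q z) = 0
    rw [this, hz', map_zero]
  -- the induced operator on the quotient
  set Abar : Z ⧸ K →ₗ[ℂ] Z ⧸ K := Submodule.mapQ K K (Q : Z →ₗ[ℂ] Z) hle with hAbar
  have hAbar_mk : ∀ x : Z, Abar (Submodule.Quotient.mk x) = Submodule.Quotient.mk (Q x) :=
    fun x => rfl
  set Qbar : (Z ⧸ K) →L[ℂ] (Z ⧸ K) :=
    LinearMap.mkContinuous Abar ‖Q‖ (quot_norm_bound K Abar Q hAbar_mk) with hQbar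
  have hQbar_mk : ∀ x : Z, Qbar (Submodule.Quotient.mk x) = Submodule.Quotient.mk (Q x) :=
    hAbar_mk
  -- powers of Qbar
  have hQbar_pow : ∀ n : ℕ, ∀ x : Z,
      (Qbar ^ n) (Submodule.Quotient.mk x) = Submodule.Quotient.mk ((Q ^ n) x) := by
    intro n
    induction n with
    | zero => intro x; simp
    | succ n ih =>
      intro x
      have h1 : (Qbar ^ (n + 1)) (Submodule.Quotient.mk x)
          = (Qbar ^ n) (Qbar (Submodule.Quotient.mk x)) := by rw [pow_succ]; rfl
      have h2 : (Q ^ (n + 1)) x = (Q ^ n) (Q x) := by rw [pow_succ]; rfl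
      rw [h1, h2, hQbar_mk, ih]
  -- norm comparison for powers
  have hQbar_norm : ∀ n : ℕ, ‖Qbar ^ n‖ ≤ ‖Q ^ n‖ := by
    intro n
    refine ContinuousLinearMap.opNorm_le_bound _ (norm_nonneg _) fun x => ?_
    exact quot_norm_bound K (Qbar ^ n : (Z ⧸ K) →L[ℂ] (Z ⧸ K)).toLinearMap (Q ^ n)
      (fun z => hQbar_pow n z) x
  -- Qbar is surjective (this is where finite descent is used)
  have hsurj : Function.Surjective Qbar := by
    intro y
    obtain ⟨x, rfl⟩ := Submodule.Quotient.mk_surjective K y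
    have hx : (Q ^ p) x ∈ LinearMap.range ((Q ^ (p + 1) : Z →L[ℂ] Z) : Z →ₗ[ℂ] Z) := by
      rw [← hd]; exact LinearMap.mem_range_self _ x
    obtain ⟨w, hw⟩ := hx
    refine ⟨Submodule.Quotient.mk w, ?_⟩
    rw [hQbar_mk]
    rw [Submodule.Quotient.eq]
    show (Q ^ p) (Q w - x) = 0
    have h2 : (Q ^ p) (Q w) = (Q ^ (p + 1)) w := by rw [pow_succ]; rfl
    rw [map_sub, h2, show (Q ^ (p + 1)) w = (Q ^ p) x from hw, sub_self]
  obtain ⟨C, hCpos, hC⟩ := Qbar.exists_preimage_norm_le hsurj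
  -- iterate preimages
  have hCn : ∀ n : ℕ, ∀ y : Z ⧸ K, ∃ x, (Qbar ^ n) x = y ∧ ‖x‖ ≤ C ^ n * ‖y‖ := by
    intro n
    induction n with
    | zero => intro y; exact ⟨y, by simp, by simp⟩
    | succ n ih =>
      intro y
      obtain ⟨x', hx'1, hx'2⟩ := hC y
      obtain ⟨x, hx1, hx2⟩ := ih x'
      refine ⟨x, ?_, ?_⟩
      · rw [pow_succ']
        show Qbar ((Qbar ^ n) x) = y
        rw [hx1, hx'1]
      · calc ‖x‖ ≤ C ^ n * ‖x'‖ := hx2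
          _ ≤ C ^ n * (C * ‖y‖) := by
              exact mul_le_mul_of_nonneg_left hx'2 (pow_nonneg hCpos.le n)
          _ = C ^ (n + 1) * ‖y‖ := by ring
  -- a nonzero element of the quotient
  set y₀ : Z ⧸ K := Submodule.Quotient.mk x₀ with hy₀
  have hy₀ne : y₀ ≠ 0 := by
    rw [hy₀, Ne, Submodule.Quotient.mk_eq_zero]
    exact hx₀
  have hy₀pos : 0 < ‖y₀‖ := norm_pos_iff.mpr hy₀ne
  -- lower bound on ‖Q ^ n‖
  have hlow : ∀ n : ℕ, (1 / C) ^ n ≤ ‖Q ^ n‖ := by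
    intro n
    obtain ⟨x, hx1, hx2⟩ := hCn n y₀
    have h1 : ‖y₀‖ ≤ ‖Qbar ^ n‖ * ‖x‖ := by
      rw [← hx1]; exact (Qbar ^ n).le_opNorm x
    have h2 : ‖y₀‖ ≤ ‖Q ^ n‖ * (C ^ n * ‖y₀‖) := by
      calc ‖y₀‖ ≤ ‖Qbar ^ n‖ * ‖x‖ := h1
        _ ≤ ‖Q ^ n‖ * ‖x‖ := mul_le_mul_of_nonneg_right (hQbar_norm n) (norm_nonneg _)
        _ ≤ ‖Q ^ n‖ * (C ^ n * ‖y₀‖) := mul_le_mul_of_nonneg_left hx2 (norm_nonneg _)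
    have hCnpos : (0:ℝ) < C ^ n := pow_pos hCpos n
    have h3 : 1 ≤ ‖Q ^ n‖ * C ^ n := by
      have := (mul_le_mul_iff_of_pos_right hy₀pos).mpr (le_refl (1:ℝ))
      nlinarith [h2, hy₀pos]
    rw [one_div, inv_pow]
    rw [inv_le_iff_one_le_mul₀' hCnpos]
    linarith [h3]
  -- spectral radius of Q is zero
  have hrad : spectralRadius ℂ Q = 0 := by
    refine le_antisymm ?_ zero_le
    refine iSup₂_le fun k hk => ?_
    have : k = 0 := hq hk
    simp [this]
  -- Gelfand's formula
  have hG := spectrum.pow_nnnorm_pow_one_div_tendsto_nhds_spectralRadius Q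
  rw [hrad] at hG
  set c : ENNReal := ENNReal.ofReal (1 / C) with hc
  have hcpos : (0 : ENNReal) < c := ENNReal.ofReal_pos.mpr (by positivity)
  have hev := hG.eventually_lt_const hcpos
  obtain ⟨n, hn1, hn2⟩ := (hev.and (Filter.eventually_ge_atTop 1)).exists
  -- contradiction: c ≤ ‖Q^n‖₊ ^ (1/n)
  have hnne : (n:ℝ) ≠ 0 := by
    have : (1:ℕ) ≤ n := hn2
    positivity
  have hkey : c ≤ (‖Q ^ n‖₊ : ENNReal) ^ (1 / (n:ℝ)) := by
    have h1 : c ^ (n : ℕ) ≤ (‖Q ^ n‖₊ : ENNReal) := by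
      rw [hc, ← ENNReal.ofReal_pow (by positivity)]
      rw [show ((‖Q ^ n‖₊ : ENNReal)) = ENNReal.ofReal ‖Q ^ n‖ from (ofReal_norm _).symm]
      exact ENNReal.ofReal_le_ofReal (hlow n)
    calc c = (c ^ (n:ℕ)) ^ (1 / (n:ℝ)) := by
            rw [← ENNReal.rpow_natCast c n, ← ENNReal.rpow_mul,
              mul_one_div_cancel hnne, ENNReal.rpow_one]
      _ ≤ ((‖Q ^ n‖₊ : ENNReal)) ^ (1 / (n:ℝ)) := by
            exact ENNReal.rpow_le_rpow h1 (by positivity)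
  exact absurd hn1 (not_lt.mpr hkey)

end PBW

/-- a pseudo B-Weyl operator of finite descent is B-Weyl. -/
theorem stmt0 {X : Type*} [NormedAddCommGroup X] [NormedSpace ℂ X] [CompleteSpace X]
    (T : X →L[ℂ] X)
    (hdesc : ∃ p : ℕ, LinearMap.range ((T ^ p : X →L[ℂ] X) : X →ₗ[ℂ] X) = LinearMap.range ((T ^ (p + 1) : X →L[ℂ] X) : X →ₗ[ℂ] X))
    (hT : PBW.IsPseudoBWeyl T) : PBW.IsBWeyl T := by
  obtain ⟨p, hp⟩ := hdesc
  obtain ⟨X₁, X₂, h₁, h₂, hc₁, hc₂, hcompl, hW, hQ⟩ := hT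
  refine ⟨X₁, X₂, h₁, h₂, hc₁, hc₂, hcompl, hW, ?_⟩
  haveI : CompleteSpace X₂ := hc₂.completeSpace_coe
  -- invariance of X₁ and X₂ under powers of T
  have hpow₁ : ∀ n : ℕ, ∀ x ∈ X₁, (T ^ n) x ∈ X₁ := by
    intro n
    induction n with
    | zero => intro x hx; simpa using hx
    | succ n ih =>
      intro x hx
      have : (T ^ (n+1)) x = (T ^ n) (T x) := by rw [pow_succ]; rfl
      rw [this]; exact ih _ (h₁ x hx)
  -- descent passes to the restriction Q
  have hdQ : LinearMap.range ((PBW.restrictOp T X₂ h₂ ^ p : X₂ →L[ℂ] X₂) : X₂ →ₗ[ℂ] X₂)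
      = LinearMap.range ((PBW.restrictOp T X₂ h₂ ^ (p + 1) : X₂ →L[ℂ] X₂) : X₂ →ₗ[ℂ] X₂) := by
    refine le_antisymm ?_ ?_
    · rintro _ ⟨x, rfl⟩
      have hx : (T ^ p) (x : X) ∈ LinearMap.range ((T ^ (p + 1) : X →L[ℂ] X) : X →ₗ[ℂ] X) := by
        rw [← hp]; exact LinearMap.mem_range_self _ (x : X)
      obtain ⟨y, hy⟩ := hx
      have hmem : (y : X) ∈ X₁ ⊔ X₂ := by
        rw [codisjoint_iff.mp hcompl.codisjoint]; trivial
      obtain ⟨y₁, hy₁, y₂, hy₂, hysum⟩ := Submodule.mem_sup.mp hmem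
      have hsplit : (T ^ (p+1)) y₁ + (T ^ (p+1)) y₂ = (T ^ p) (x : X) := by
        rw [← map_add, hysum]; exact hy
      -- (T^p) x ∈ X₂
      have hTx₂ : (T ^ p) (x : X) ∈ X₂ := by
        have := PBW.restrictOp_pow_coe T X₂ h₂ p x
        rw [← this]; exact Subtype.coe_prop _
      have hz₂ : (T ^ (p+1)) y₂ ∈ X₂ := by
        have := PBW.restrictOp_pow_coe T X₂ h₂ (p+1) ⟨y₂, hy₂⟩
        rw [← this]; exact Subtype.coe_prop _
      have hz₁ : (T ^ (p+1)) y₁ ∈ X₁ := hpow₁ (p+1) y₁ hy₁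
      have hz₁' : (T ^ (p+1)) y₁ ∈ X₂ := by
        have : (T ^ (p+1)) y₁ = (T ^ p) (x : X) - (T ^ (p+1)) y₂ := by
          rw [← hsplit]; abel
        rw [this]; exact Submodule.sub_mem _ hTx₂ hz₂
      have hzero : (T ^ (p+1)) y₁ = 0 :=
        Submodule.disjoint_def.mp hcompl.disjoint _ hz₁ hz₁'
      have hfinal : (T ^ p) (x : X) = (T ^ (p+1)) y₂ := by
        rw [← hsplit, hzero, zero_add]
      refine ⟨⟨y₂, hy₂⟩, ?_⟩
      apply Subtype.coe_injective
      show ((PBW.restrictOp T X₂ h₂ ^ (p + 1)) ⟨y₂, hy₂⟩ : X)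
        = ((PBW.restrictOp T X₂ h₂ ^ p) x : X)
      rw [PBW.restrictOp_pow_coe, PBW.restrictOp_pow_coe]
      exact hfinal.symm
    · rintro _ ⟨x, rfl⟩
      refine ⟨PBW.restrictOp T X₂ h₂ x, ?_⟩
      rw [pow_succ]; rfl
  exact ⟨p, PBW.quasinilpotent_descent_pow_eq_zero (PBW.restrictOp T X₂ h₂) hQ p hdQ⟩
end
end

section
/- Let T ∈ L(X) and let Q ∈ L(X) be a quasi-nilpotent operator commuting with T. Then σ_gD(T + Q) = σ_gD(T). -/
open Filter Set ContinuousLinearMap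

noncomputable section

open Filter Set spectrum Topology ENNReal NNReal

section Aux

variable {A : Type*} [NormedRing A] [NormedAlgebra ℂ A] [CompleteSpace A]

lemma rad0_of {q : A} (h : spectrum ℂ q ⊆ {0}) : spectralRadius ℂ q = 0 := by
  refine le_antisymm ?_ zero_le
  refine iSup₂_le fun k hk => ?_
  have : k = 0 := h hk
  simp [this]

lemma rad0_mul {b q : A} (hc : Commute b q) (hq : spectralRadius ℂ q = 0) :
    spectralRadius ℂ (b * q) = 0 := by
  refine le_antisymm ?_ zero_le
  refine (spectralRadius_le_liminf_pow_nnnorm_pow_one_div ℂ (b * q)).trans ?_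
  have hbd : ∀ᶠ n : ℕ in atTop,
      (‖(b * q) ^ n‖₊ : ℝ≥0∞) ^ (1 / (n : ℝ)) ≤
        (‖b‖₊ : ℝ≥0∞) * (‖q ^ n‖₊ : ℝ≥0∞) ^ (1 / (n : ℝ)) := by
    filter_upwards [eventually_ge_atTop 1] with n hn
    have h1 : ‖(b * q) ^ n‖₊ ≤ ‖b‖₊ ^ n * ‖q ^ n‖₊ := by
      rw [hc.mul_pow]
      exact (nnnorm_mul_le _ _).trans (mul_le_mul_left (nnnorm_pow_le' b hn) _)
    calc (‖(b * q) ^ n‖₊ : ℝ≥0∞) ^ (1 / (n : ℝ))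
        ≤ ((‖b‖₊ ^ n * ‖q ^ n‖₊ : ℝ≥0) : ℝ≥0∞) ^ (1 / (n : ℝ)) := by
          exact ENNReal.rpow_le_rpow (by exact_mod_cast h1) (by positivity)
      _ = (‖b‖₊ : ℝ≥0∞) * (‖q ^ n‖₊ : ℝ≥0∞) ^ (1 / (n : ℝ)) := by
          push_cast
          rw [ENNReal.mul_rpow_of_nonneg _ _ (by positivity), ← ENNReal.rpow_natCast,
            ← ENNReal.rpow_mul]
          congr 1
          rw [mul_one_div, div_self (Nat.cast_ne_zero.mpr (by omega) : (n:ℝ) ≠ 0),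
            ENNReal.rpow_one]
  have hlim : Tendsto (fun n : ℕ => (‖b‖₊ : ℝ≥0∞) * (‖q ^ n‖₊ : ℝ≥0∞) ^ (1 / (n : ℝ)))
      atTop (𝓝 0) := by
    have := ENNReal.Tendsto.const_mul (a := (‖b‖₊ : ℝ≥0∞))
      (pow_nnnorm_pow_one_div_tendsto_nhds_spectralRadius q)
      (Or.inr ENNReal.coe_ne_top)
    simpa [hq] using this
  calc atTop.liminf (fun n : ℕ => (‖(b * q) ^ n‖₊ : ℝ≥0∞) ^ (1 / (n : ℝ)))
      ≤ atTop.liminf (fun n : ℕ => (‖b‖₊ : ℝ≥0∞) * (‖q ^ n‖₊ : ℝ≥0∞) ^ (1 / (n : ℝ))) :=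
        liminf_le_liminf hbd
    _ = 0 := hlim.liminf_eq

lemma unit_add {a q : A} (ha : IsUnit a) (hc : Commute a q)
    (hq : spectralRadius ℂ q = 0) : IsUnit (a + q) := by
  obtain ⟨u, rfl⟩ := ha
  have hc' : Commute (↑u⁻¹ : A) q := hc.units_inv_left
  have hr : spectralRadius ℂ ((↑u⁻¹ : A) * q) = 0 := rad0_mul hc' hq
  have hres : (-1 : ℂ) ∈ resolventSet ℂ ((↑u⁻¹ : A) * q) :=
    spectrum.mem_resolventSet_of_spectralRadius_lt (by rw [hr]; norm_num)
  rw [spectrum.mem_resolventSet_iff] at hres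
  have h1 : IsUnit ((1 : A) + ↑u⁻¹ * q) := by
    rw [← IsUnit.neg_iff]
    convert hres using 1
    rw [map_neg, map_one, neg_add, sub_eq_add_neg]
  have heq : (↑u : A) * (1 + ↑u⁻¹ * q) = ↑u + q := by
    rw [mul_add, mul_one, Units.mul_inv_cancel_left]
  exact heq ▸ u.isUnit.mul h1

lemma spectrum_add_subset {a q : A} (hc : Commute a q) (hq : spectrum ℂ q ⊆ {0}) :
    spectrum ℂ (a + q) ⊆ spectrum ℂ a := by
  intro l hl
  by_contra hla
  rw [spectrum.notMem_iff] at hla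
  have hqn : spectralRadius ℂ (-q) = 0 := by
    refine rad0_of ?_
    rw [← spectrum.neg_eq]
    intro x hx
    rw [Set.mem_neg] at hx
    have h0 : -x = 0 := hq hx
    simpa using h0
  have hca : Commute (algebraMap ℂ A l) q := Algebra.commutes l q
  have hc2 : Commute (algebraMap ℂ A l - a) (-q) := (hca.sub_left hc).neg_right
  have hu := unit_add hla hc2 hqn
  have : IsUnit (algebraMap ℂ A l - (a + q)) := by
    rw [sub_add_eq_sub_sub, sub_eq_add_neg]
    exact hu
  exact (spectrum.mem_iff.mp hl) this

lemma spectrum_add_eq {a q : A} (hc : Commute a q) (hq : spectrum ℂ q ⊆ {0}) :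
    spectrum ℂ (a + q) = spectrum ℂ a := by
  refine subset_antisymm (spectrum_add_subset hc hq) ?_
  have h1 : spectrum ℂ (-q) ⊆ {0} := by
    rw [← spectrum.neg_eq]
    intro x hx
    rw [Set.mem_neg] at hx
    have h0 : -x = 0 := hq hx
    simpa using h0
  have h2 : Commute (a + q) (-q) := (hc.add_left (Commute.refl q)).neg_right
  have := spectrum_add_subset h2 h1
  simpa using this

end Aux

/-- the generalized Drazin spectrum is stable under commuting quasi-nilpotent
perturbations. -/
theorem stmt4 {X : Type*} [NormedAddCommGroup X] [NormedSpace ℂ X] [CompleteSpace X]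
    (T Q : X →L[ℂ] X) (hQ : PBW.IsQuasinilpotentOp Q) (hc : Commute T Q) :
    PBW.gDSpectrum (T + Q) = PBW.gDSpectrum T := by
  have hspec : spectrum ℂ (T + Q) = spectrum ℂ T := spectrum_add_eq hc hQ
  unfold PBW.gDSpectrum
  rw [hspec]
end
end

section
/- Let R, T, U be bounded linear operators on a Banach space X with TRT = TUT. Then σ_gD(TR) = σ_gD(UT). -/
open Filter Set ContinuousLinearMap

noncomputable section

section Aux
open Filter Set

/-- Corach–Duggal–Harte: if `a*b*a = a*c*a` and `1 - a*c` is a unit, then `1 - b*a` is a unit. -/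
theorem cdh' {A : Type*} [Ring A] {a b c : A} (h : a * b * a = a * c * a)
    (hu : IsUnit (1 - a * c)) : IsUnit (1 - b * a) := by
  obtain ⟨v, hv⟩ := hu
  set d := (↑v⁻¹ : A) with hd
  have hud : (1 - a * c) * d = 1 := by rw [← hv]; exact v.mul_inv
  have hdu : d * (1 - a * c) = 1 := by rw [← hv]; exact v.inv_mul
  have hdu' : d * (a * c) = d - 1 := by
    refine eq_sub_of_add_eq ?_
    have h1 : d - d * (a * c) = 1 := by rw [← hdu]; noncomm_ring
    calc d * (a * c) + 1 = d * (a * c) + (d - d * (a * c)) := by rw [h1]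
      _ = d := by noncomm_ring
  have hud' : a * c * d = d - 1 := by
    refine eq_sub_of_add_eq ?_
    have h1 : d - a * c * d = 1 := by rw [← hud]; noncomm_ring
    calc a * c * d + 1 = a * c * d + (d - a * c * d) := by rw [h1]
      _ = d := by noncomm_ring
  refine ⟨⟨1 - b * a, 1 + b * d * a, ?_, ?_⟩, rfl⟩
  · -- (1 - b*a) * (1 + b*d*a) = 1
    have h1 : d * a = a + a * c * (d * a) := by
      calc d * a = (a * c * d + 1) * a := by
            rw [show a * c * d + 1 = d by rw [hud']; noncomm_ring]
        _ = a + a * c * (d * a) := by noncomm_ring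
    have key : a * (b * (d * a)) = d * a - a := by
      calc a * (b * (d * a))
          = a * b * (a + a * c * (d * a)) := by rw [← h1]; noncomm_ring
        _ = a * b * a + (a * b * a) * (c * (d * a)) := by noncomm_ring
        _ = a * c * a + (a * c * a) * (c * (d * a)) := by rw [h]
        _ = a * c * (a + a * c * (d * a)) := by noncomm_ring
        _ = a * c * (d * a) := by rw [← h1]
        _ = d * a - a := by exact eq_sub_of_add_eq (by rw [add_comm]; exact h1.symm)
    calc (1 - b * a) * (1 + b * d * a)
        = 1 + b * (d * a) - b * a - b * (a * (b * (d * a))) := by noncomm_ring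
      _ = 1 + b * (d * a) - b * a - b * (d * a - a) := by rw [key]
      _ = 1 := by noncomm_ring
  · -- (1 + b*d*a) * (1 - b*a) = 1
    have key : d * (a * (b * a)) = d * a - a := by
      calc d * (a * (b * a)) = d * (a * c) * a := by
            rw [show a * (b * a) = a * c * a by rw [← h]; noncomm_ring]; noncomm_ring
        _ = (d - 1) * a := by rw [hdu']
        _ = d * a - a := by noncomm_ring
    calc (1 + b * d * a) * (1 - b * a)
        = 1 - b * a + b * (d * a) - b * (d * (a * (b * a))) := by noncomm_ring
      _ = 1 - b * a + b * (d * a) - b * (d * a - a) := by rw [key]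
      _ = 1 := by noncomm_ring

theorem jac' {A : Type*} [Ring A] {a b : A} (hu : IsUnit (1 - a * b)) : IsUnit (1 - b * a) :=
  cdh' (rfl : a * b * a = a * b * a) hu

theorem spec_off_zero' {A : Type*} [Ring A] [Algebra ℂ A]
    {R T U : A} (h : T * R * T = T * U * T) {l : ℂ} (hl : l ≠ 0) :
    (l ∈ spectrum ℂ (T * R) ↔ l ∈ spectrum ℂ (U * T)) := by
  set t := T
  set r := l⁻¹ • R with hr
  set u := l⁻¹ • U with huu
  have ht : t * r * t = t * u * t := by
    rw [hr, huu, mul_smul_comm, smul_mul_assoc, mul_smul_comm, smul_mul_assoc, h]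
  have conv : ∀ x : A, (l ∈ spectrum ℂ x ↔ ¬ IsUnit (1 - l⁻¹ • x)) := by
    intro x
    rw [spectrum.mem_iff, Algebra.algebraMap_eq_smul_one]
    refine not_congr ?_
    have h2 := IsUnit.smul_sub_iff_sub_inv_smul (Units.mk0 l hl) x
    simpa [Units.smul_def] using h2
  rw [conv, conv]
  have e1 : (1 : A) - l⁻¹ • (T * R) = 1 - t * r := by rw [hr, mul_smul_comm]
  have e2 : (1 : A) - l⁻¹ • (U * T) = 1 - u * t := by rw [huu, smul_mul_assoc]
  rw [e1, e2]
  constructor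
  · exact fun h1 h2 => h1 (jac' (cdh' ht (jac' h2)))
  · exact fun h1 h2 => h1 (cdh' ht.symm h2)

theorem accPt_diff_singleton {α : Type*} [TopologicalSpace α] [T1Space α] (x a : α) (S : Set α) :
    AccPt x (𝓟 S) ↔ AccPt x (𝓟 (S \ {a})) := by
  constructor
  · intro hx
    have hx' : AccPt x (𝓟 (S \ {a}) ⊔ 𝓟 {a}) := by
      refine hx.mono ?_
      rw [sup_principal]
      refine principal_mono.2 fun y hy => ?_
      by_cases hya : y = a
      · exact Or.inr (by simp [hya])
      · exact Or.inl ⟨hy, hya⟩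
    rcases accPt_sup.1 hx' with h' | h'
    · exact h'
    · exfalso
      rw [accPt_iff_frequently] at h'
      rcases eq_or_ne x a with rfl | hxa
      · obtain ⟨y, hy1, hy2⟩ := h'.exists
        exact hy1 hy2
      · obtain ⟨y, ⟨hy1, hy2⟩, hy3⟩ := (h'.and_eventually (eventually_ne_nhds hxa)).exists
        exact hy3 hy2
  · exact fun hx => hx.mono (principal_mono.2 diff_subset)


end Aux

/-- if `TRT = TUT` then `σ_gD(TR) = σ_gD(UT)`. -/
theorem stmt5 {X : Type*} [NormedAddCommGroup X] [NormedSpace ℂ X] [CompleteSpace X]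
    (R T U : X →L[ℂ] X) (h : T * R * T = T * U * T) :
    PBW.gDSpectrum (T * R) = PBW.gDSpectrum (U * T) := by
  have hspec : spectrum ℂ (T * R) \ {0} = spectrum ℂ (U * T) \ {0} := by
    ext l
    simp only [Set.mem_diff, Set.mem_singleton_iff]
    exact ⟨fun ⟨h1, h2⟩ => ⟨(spec_off_zero' h h2).mp h1, h2⟩,
      fun ⟨h1, h2⟩ => ⟨(spec_off_zero' h h2).mpr h1, h2⟩⟩
  ext l
  show AccPt l (𝓟 (spectrum ℂ (T * R))) ↔ AccPt l (𝓟 (spectrum ℂ (U * T)))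
  rw [accPt_diff_singleton l 0, accPt_diff_singleton l 0 (spectrum ℂ (U * T)), hspec]
end
end

section
/- For any bounded linear operators R, T on a Banach space X, σ_gD(TR) = σ_gD(RT). -/
open Filter Set ContinuousLinearMap

noncomputable section

lemma acc_congr_aux {S T : Set ℂ} (h : S \ {0} = T \ {0}) (l : ℂ) :
    AccPt l (𝓟 S) ↔ AccPt l (𝓟 T) := by
  have key : ∀ y : ℂ, y ≠ 0 → (y ∈ S ↔ y ∈ T) := by
    intro y hy
    constructor <;> intro hm
    · exact (h ▸ (Set.mem_diff_singleton.mpr ⟨hm, hy⟩ : y ∈ S \ {0})).1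
    · exact (h.symm ▸ (Set.mem_diff_singleton.mpr ⟨hm, hy⟩ : y ∈ T \ {0})).1
  rw [accPt_iff_frequently, accPt_iff_frequently]
  by_cases hl : l = 0
  · subst hl
    refine frequently_congr (Eventually.of_forall fun y => ?_)
    exact and_congr_right fun h1 => key y h1
  · refine frequently_congr ?_
    filter_upwards [eventually_ne_nhds hl] with y hy
    exact and_congr_right fun _ => key y hy

/-- `σ_gD(TR) = σ_gD(RT)`. -/
theorem stmt6 {X : Type*} [NormedAddCommGroup X] [NormedSpace ℂ X] [CompleteSpace X]
    (R T : X →L[ℂ] X) :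
    PBW.gDSpectrum (T * R) = PBW.gDSpectrum (R * T) := by
  ext l
  exact acc_congr_aux (spectrum.nonzero_mul_comm T R) l
end
end

section
/- Let R, T ∈ L(X) and let A be the operator on X ⊕ X given by the block matrix with 0 on the diagonal and T, R on the off-diagonals (A(x,y) = (Ty, Rx)). Then σ_gD(A) = {λ ∈ ℂ : λ² ∈ σ_gD(TR)}. -/
open Filter Set ContinuousLinearMap

noncomputable section

open Topology

namespace Stmt9Aux

variable {X Y : Type*} [NormedAddCommGroup X] [NormedSpace ℂ X]
  [NormedAddCommGroup Y] [NormedSpace ℂ Y]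

lemma prodMap_mul (f f' : X →L[ℂ] X) (g g' : Y →L[ℂ] Y) :
    f.prodMap g * f'.prodMap g' = (f * f').prodMap (g * g') :=
  ContinuousLinearMap.ext fun p => rfl

lemma prodMap_one : (1 : X →L[ℂ] X).prodMap (1 : Y →L[ℂ] Y) = 1 :=
  ContinuousLinearMap.ext fun p => rfl

lemma isUnit_prodMap (f : X →L[ℂ] X) (g : Y →L[ℂ] Y) :
    IsUnit (f.prodMap g) ↔ IsUnit f ∧ IsUnit g := by
  constructor
  · rintro ⟨u, hu⟩
    have h1 : ((↑u⁻¹ : (X × Y) →L[ℂ] (X × Y)) * f.prodMap g) = 1 := by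
      rw [← hu]; exact u.inv_mul
    have h2 : (f.prodMap g * (↑u⁻¹ : (X × Y) →L[ℂ] (X × Y))) = 1 := by
      rw [← hu]; exact u.mul_inv
    set v : (X × Y) →L[ℂ] (X × Y) := ↑u⁻¹ with hv
    have e1 : ∀ p : X × Y, v (f.prodMap g p) = p := fun p => by
      have := congrArg (fun (w : (X × Y) →L[ℂ] (X × Y)) => w p) h1
      simpa [ContinuousLinearMap.mul_apply] using this
    have e2 : ∀ p : X × Y, f.prodMap g (v p) = p := fun p => by
      have := congrArg (fun (w : (X × Y) →L[ℂ] (X × Y)) => w p) h2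
      simpa [ContinuousLinearMap.mul_apply] using this
    constructor
    · refine isUnit_iff_exists.mpr
        ⟨(fst ℂ X Y).comp (v.comp (inl ℂ X Y)), ?_, ?_⟩
      · refine ContinuousLinearMap.ext fun x => ?_
        have := congrArg Prod.fst (e2 (x, 0))
        simpa [ContinuousLinearMap.mul_apply] using this
      · refine ContinuousLinearMap.ext fun x => ?_
        have := congrArg Prod.fst (e1 (x, 0))
        simpa [ContinuousLinearMap.mul_apply] using this
    · refine isUnit_iff_exists.mpr
        ⟨(snd ℂ X Y).comp (v.comp (inr ℂ X Y)), ?_, ?_⟩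
      · refine ContinuousLinearMap.ext fun y => ?_
        have := congrArg Prod.snd (e2 (0, y))
        simpa [ContinuousLinearMap.mul_apply] using this
      · refine ContinuousLinearMap.ext fun y => ?_
        have := congrArg Prod.snd (e1 (0, y))
        simpa [ContinuousLinearMap.mul_apply] using this
  · rintro ⟨hf, hg⟩
    obtain ⟨uf, rfl⟩ := hf
    obtain ⟨ug, rfl⟩ := hg
    exact isUnit_iff_exists.mpr ⟨(↑uf⁻¹ : X →L[ℂ] X).prodMap (↑ug⁻¹ : Y →L[ℂ] Y),
      by rw [prodMap_mul, Units.mul_inv, Units.mul_inv, prodMap_one],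
      by rw [prodMap_mul, Units.inv_mul, Units.inv_mul, prodMap_one]⟩

lemma spectrum_prodMap (f : X →L[ℂ] X) (g : Y →L[ℂ] Y) :
    spectrum ℂ (f.prodMap g) = spectrum ℂ f ∪ spectrum ℂ g := by
  ext z
  have key : algebraMap ℂ ((X × Y) →L[ℂ] (X × Y)) z - f.prodMap g
      = (algebraMap ℂ (X →L[ℂ] X) z - f).prodMap (algebraMap ℂ (Y →L[ℂ] Y) z - g) := by
    refine ContinuousLinearMap.ext fun p => ?_
    simp [Algebra.algebraMap_eq_smul_one, Prod.ext_iff]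
  simp only [spectrum.mem_iff, Set.mem_union, key, isUnit_prodMap]
  tauto

lemma sq_mem_spectrum {A : Type*} [Ring A] [Algebra ℂ A] (a : A) (μ : ℂ) :
    μ ^ 2 ∈ spectrum ℂ (a * a) ↔ μ ∈ spectrum ℂ a ∨ -μ ∈ spectrum ℂ a := by
  have hc : Commute (algebraMap ℂ A μ) a := Algebra.commutes μ a
  set m : A := algebraMap ℂ A μ with hm
  have key : algebraMap ℂ A (μ ^ 2) - a * a = (m - a) * (m + a) := by
    have : (m - a) * (m + a) = m * m + m * a - (a * m + a * a) := by
      rw [sub_mul, mul_add, mul_add]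
    rw [map_pow, pow_two, this, hc.eq]
    abel
  have hcomm : Commute (m - a) (m + a) :=
    ((Commute.refl m).add_right hc).sub_left (hc.symm.add_right (Commute.refl a))
  have hneg : algebraMap ℂ A (-μ) - a = -(m + a) := by
    rw [map_neg, ← hm]; abel
  rw [spectrum.mem_iff, key, hcomm.isUnit_mul_iff, spectrum.mem_iff, spectrum.mem_iff,
    hneg, IsUnit.neg_iff]
  tauto

lemma spectrum_mul_self {A : Type*} [Ring A] [Algebra ℂ A] (a : A) :
    spectrum ℂ (a * a) = (fun z : ℂ => z ^ 2) '' spectrum ℂ a := by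
  ext z
  constructor
  · intro hz
    obtain ⟨μ, rfl⟩ := IsAlgClosed.exists_pow_nat_eq (k := ℂ) z (by norm_num : 0 < 2)
    rcases (sq_mem_spectrum a μ).mp hz with h | h
    · exact ⟨μ, h, rfl⟩
    · exact ⟨-μ, h, neg_sq μ⟩
  · rintro ⟨μ, hμ, rfl⟩
    exact (sq_mem_spectrum a μ).mpr (Or.inl hμ)

lemma accPt_of_seq {C : Set ℂ} {z : ℂ} {u : ℕ → ℂ} (hu : ∀ n, u n ∈ C)
    (hne : ∀ n, u n ≠ z) (hlim : Tendsto u atTop (𝓝 z)) : AccPt z (𝓟 C) := by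
  rw [accPt_iff_nhds]
  intro U hU
  obtain ⟨n, hn⟩ := (hlim.eventually (eventually_of_mem hU fun y hy => hy)).exists
  exact ⟨u n, ⟨hn, hu n⟩, hne n⟩

lemma accPt_neg {C : Set ℂ} (hC : ∀ x ∈ C, -x ∈ C) {z : ℂ}
    (h : AccPt (-z) (𝓟 C)) : AccPt z (𝓟 C) := by
  rw [accPt_iff_nhds] at h ⊢
  intro U hU
  have hU' : (fun x : ℂ => -x) ⁻¹' U ∈ 𝓝 (-z) := by
    have hcont : ContinuousAt (fun x : ℂ => -x) (-z) := continuous_neg.continuousAt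
    exact hcont.preimage_mem_nhds (by simpa using hU)
  obtain ⟨y, ⟨hyU, hyC⟩, hyne⟩ := h _ hU'
  exact ⟨-y, ⟨hyU, hC y hyC⟩, fun hyz => hyne (neg_eq_iff_eq_neg.mp hyz)⟩

lemma accPt_diff_singleton {C : Set ℂ} {z p : ℂ} :
    AccPt z (𝓟 C) ↔ AccPt z (𝓟 (C \ {p})) := by
  rw [accPt_iff_nhds, accPt_iff_nhds]
  constructor
  · intro h U hU
    by_cases hp : p = z
    · obtain ⟨y, ⟨hyU, hyC⟩, hyne⟩ := h U hU
      exact ⟨y, ⟨hyU, hyC, by simpa [hp] using hyne⟩, hyne⟩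
    · obtain ⟨y, ⟨⟨hyU, hyp⟩, hyC⟩, hyne⟩ :=
        h _ (inter_mem hU (compl_singleton_mem_nhds fun h' => hp h'.symm))
      exact ⟨y, ⟨hyU, hyC, hyp⟩, hyne⟩
  · intro h U hU
    obtain ⟨y, ⟨hyU, hyC, _⟩, hyne⟩ := h U hU
    exact ⟨y, ⟨hyU, hyC⟩, hyne⟩

lemma accPt_sq_image {S : Set ℂ} (hS : IsCompact S) (hsymm : ∀ x ∈ S, -x ∈ S) (l : ℂ) :
    AccPt l (𝓟 S) ↔ AccPt (l ^ 2) (𝓟 ((fun z : ℂ => z ^ 2) '' S)) := by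
  constructor
  · intro h
    rw [accPt_iff_nhds] at h ⊢
    intro U hU
    have hV : (fun z : ℂ => z ^ 2) ⁻¹' U ∈ 𝓝 l :=
      ((continuous_pow 2).continuousAt).preimage_mem_nhds hU
    by_cases hl : l = 0
    · obtain ⟨y, ⟨hyV, hyS⟩, hyne⟩ := h _ hV
      refine ⟨y ^ 2, ⟨hyV, ⟨y, hyS, rfl⟩⟩, ?_⟩
      subst hl
      simpa using pow_ne_zero 2 hyne
    · have hll : l ≠ -l := by
        intro h'
        exact hl (by linear_combination h' / 2)
      obtain ⟨y, ⟨⟨hyV, hyne'⟩, hyS⟩, hyne⟩ :=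
        h _ (inter_mem hV (compl_singleton_mem_nhds hll))
      refine ⟨y ^ 2, ⟨hyV, ⟨y, hyS, rfl⟩⟩, ?_⟩
      have hyne'' : y ≠ -l := by simpa using hyne'
      exact fun hsq =>
        ((Commute.all y l).sq_eq_sq_iff_eq_or_eq_neg.mp hsq).elim hyne hyne''
  · intro h
    have H : ∀ n : ℕ, ∃ y, y ∈ S ∧ y ^ 2 ≠ l ^ 2 ∧ dist (y ^ 2) (l ^ 2) < 1 / (n + 1) := by
      intro n
      rw [accPt_iff_nhds] at h
      obtain ⟨w, ⟨hwB, ⟨y, hyS, rfl⟩⟩, hwne⟩ := h (Metric.ball (l ^ 2) (1 / (n + 1)))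
        (Metric.ball_mem_nhds _ (by positivity))
      exact ⟨y, hyS, hwne, by simpa [Metric.mem_ball] using hwB⟩
    choose zseq hzS hzne hzd using H
    obtain ⟨a, haS, φ, hφ, hconv⟩ := hS.tendsto_subseq hzS
    have hsq1 : Tendsto (fun n => zseq (φ n) ^ 2) atTop (𝓝 (a ^ 2)) := hconv.pow 2
    have hsq2 : Tendsto (fun n => zseq (φ n) ^ 2) atTop (𝓝 (l ^ 2)) := by
      rw [tendsto_iff_dist_tendsto_zero]
      refine squeeze_zero (fun n => dist_nonneg) (fun n => (hzd (φ n)).le) ?_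
      exact tendsto_one_div_add_atTop_nhds_zero_nat.comp hφ.tendsto_atTop
    have ha : a ^ 2 = l ^ 2 := tendsto_nhds_unique hsq1 hsq2
    have hacc : AccPt a (𝓟 S) :=
      accPt_of_seq (fun n => hzS (φ n))
        (fun n hEq => hzne (φ n) (by rw [hEq, ha])) hconv
    rcases (Commute.all a l).sq_eq_sq_iff_eq_or_eq_neg.mp ha with h' | h'
    · exact h' ▸ hacc
    · exact accPt_neg hsymm (h' ▸ hacc)

end Stmt9Aux

open Stmt9Aux in
/-- for `A(x,y) = (Ty, Rx)`, `σ_gD(A) = {λ : λ² ∈ σ_gD(TR)}`. -/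
theorem stmt9 {X : Type*} [NormedAddCommGroup X] [NormedSpace ℂ X] [CompleteSpace X]
    (R T : X →L[ℂ] X) :
    PBW.gDSpectrum ((T.comp (ContinuousLinearMap.snd ℂ X X)).prod
        (R.comp (ContinuousLinearMap.fst ℂ X X))) =
      {l : ℂ | l ^ 2 ∈ PBW.gDSpectrum (T * R)} := by
  set A := (T.comp (ContinuousLinearMap.snd ℂ X X)).prod
      (R.comp (ContinuousLinearMap.fst ℂ X X)) with hA
  have hA2 : A * A = (T * R).prodMap (R * T) := by
    refine ContinuousLinearMap.ext fun p => ?_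
    simp [hA, ContinuousLinearMap.mul_apply, Prod.ext_iff]
  -- symmetry of the spectrum of A
  have hsymm : ∀ μ ∈ spectrum ℂ A, -μ ∈ spectrum ℂ A := by
    intro μ hμ
    set J : (X × X) →L[ℂ] (X × X) := (1 : X →L[ℂ] X).prodMap (-1) with hJ
    have hJJ : J * J = 1 := ContinuousLinearMap.ext fun p => by
      simp [hJ, ContinuousLinearMap.mul_apply, Prod.ext_iff]
    have hJA : J * A * J = -A := ContinuousLinearMap.ext fun p => by
      simp [hJ, hA, ContinuousLinearMap.mul_apply, Prod.ext_iff]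
    have hJunit : IsUnit J := isUnit_iff_exists.mpr ⟨J, hJJ, hJJ⟩
    rw [spectrum.mem_iff] at hμ ⊢
    intro hunit
    apply hμ
    have hneg : algebraMap ℂ ((X × X) →L[ℂ] (X × X)) (-μ) - A
        = -(algebraMap ℂ ((X × X) →L[ℂ] (X × X)) μ + A) := by
      rw [map_neg]; abel
    rw [hneg] at hunit
    have hunit' := hunit.neg
    rw [neg_neg] at hunit'
    have hJm : J * algebraMap ℂ ((X × X) →L[ℂ] (X × X)) μ * J
        = algebraMap ℂ ((X × X) →L[ℂ] (X × X)) μ := by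
      rw [Algebra.algebraMap_eq_smul_one, mul_smul_comm, mul_one, smul_mul_assoc, hJJ]
    have e2 : J * (algebraMap ℂ ((X × X) →L[ℂ] (X × X)) μ + A) * J
        = algebraMap ℂ ((X × X) →L[ℂ] (X × X)) μ - A := by
      rw [mul_add, add_mul, hJm, hJA, sub_eq_add_neg]
    rw [← e2]
    exact (hJunit.mul hunit').mul hJunit
  have himg : (fun z : ℂ => z ^ 2) '' spectrum ℂ A
      = spectrum ℂ (T * R) ∪ spectrum ℂ (R * T) := by
    rw [← spectrum_mul_self, hA2, spectrum_prodMap]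
  have hTR : ∀ w : ℂ, AccPt w (𝓟 (spectrum ℂ (R * T))) ↔
      AccPt w (𝓟 (spectrum ℂ (T * R))) := by
    intro w
    rw [accPt_diff_singleton (p := 0), accPt_diff_singleton (p := 0) (C := spectrum ℂ (T * R))]
    have hset : spectrum ℂ (R * T) \ {0} = spectrum ℂ (T * R) \ {0} := by
      ext z
      simp only [Set.mem_diff, Set.mem_singleton_iff]
      constructor <;> rintro ⟨hz, hz0⟩ <;> refine ⟨?_, hz0⟩
      · exact (spectrum.unit_mem_mul_comm (r := Units.mk0 z hz0)).mp hz
      · exact (spectrum.unit_mem_mul_comm (r := Units.mk0 z hz0)).mp hz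
    rw [hset]
  ext l
  simp only [PBW.gDSpectrum, Set.mem_setOf_eq]
  rw [accPt_sq_image (spectrum.isCompact A) hsymm, himg, ← Filter.sup_principal, accPt_sup]
  constructor
  · rintro (h | h)
    · exact h
    · exact (hTR _).mp h
  · exact fun h => Or.inl h
end
end

section
/- Let A ∈ L(X), B ∈ L(Y) with S(A*) ∩ S(B) = ∅ (in particular if A* or B has SVEP). Then for every C ∈ L(Y,X), σ_gD(M_C) = σ_gD(A) ∪ σ_gD(B), where M_C is the upper triangular operator matrix with entries A, C, B. -/
open scoped NNReal ENNReal


open Filter Set ContinuousLinearMap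

noncomputable section

section Aux

variable {Z : Type*} [NormedAddCommGroup Z] [NormedSpace ℂ Z]

lemma isUnit_of_bijective [CompleteSpace Z] {T : Z →L[ℂ] Z}
    (hinj : Function.Injective T) (hsurj : Function.Surjective T) : IsUnit T := by
  let e := ContinuousLinearEquiv.ofBijective T
    (LinearMap.ker_eq_bot.mpr hinj) (LinearMap.range_eq_top.mpr hsurj)
  refine ⟨⟨T, (e.symm : Z →L[ℂ] Z), ?_, ?_⟩, rfl⟩
  · ext x
    have : T (e.symm x) = e (e.symm x) := by
      rw [ContinuousLinearEquiv.coeFn_ofBijective]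
    simp [ContinuousLinearMap.mul_apply, this]
  · ext x
    have : T x = e x := by rw [ContinuousLinearEquiv.coeFn_ofBijective]
    simp [ContinuousLinearMap.mul_apply, this]

lemma not_hasSVEPAt_of [CompleteSpace Z] (T : Z →L[ℂ] Z) (l : ℂ)
    (hsurj : Function.Surjective ⇑(T - l • 1)) {y₀ : Z} (hy₀ : (T - l • 1) y₀ = 0)
    (hne : y₀ ≠ 0) : ¬ PBW.HasSVEPAt T l := by
  obtain ⟨K, hKpos, hK⟩ := (T - l • 1).exists_preimage_norm_le hsurj
  choose g hg hgn using hK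
  set y : ℕ → Z := fun n => Nat.rec y₀ (fun _ z => g z) n with hy
  have hy0 : y 0 = y₀ := rfl
  have hystep : ∀ n, (T - l • 1) (y (n + 1)) = y n := fun n => hg (y n)
  have hybound : ∀ n, ‖y n‖ ≤ K ^ n * ‖y₀‖ := by
    intro n
    induction n with
    | zero => simp [hy0]
    | succ n ih =>
      calc ‖y (n + 1)‖ ≤ K * ‖y n‖ := hgn (y n)
        _ ≤ K * (K ^ n * ‖y₀‖) := by
            apply mul_le_mul_of_nonneg_left ih hKpos.le
        _ = K ^ (n + 1) * ‖y₀‖ := by ring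
  set p : FormalMultilinearSeries ℂ ℂ Z :=
    fun n => ContinuousMultilinearMap.mkPiRing ℂ (Fin n) (y n) with hp
  have hpn : ∀ n, ‖p n‖ = ‖y n‖ := fun n => ContinuousMultilinearMap.norm_mkPiRing _
  set r : ℝ≥0 := ⟨(2 * K)⁻¹, by positivity⟩ with hr
  have hr0 : (0 : ℝ) < (r : ℝ) := by
    show (0:ℝ) < (2*K)⁻¹
    positivity
  have hKr : K * ((2 * K)⁻¹) = 2⁻¹ := by
    field_simp
  have hrle : (r : ℝ≥0∞) ≤ p.radius := by
    apply p.le_radius_of_bound ‖y₀‖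
    intro n
    have h1 : ‖p n‖ * (r : ℝ) ^ n ≤ (K ^ n * ‖y₀‖) * ((2 * K)⁻¹) ^ n := by
      rw [hpn]
      apply mul_le_mul_of_nonneg_right (hybound n) (by positivity)
    refine h1.trans ?_
    have : (K ^ n * ‖y₀‖) * ((2 * K)⁻¹) ^ n = ‖y₀‖ * (2⁻¹ : ℝ) ^ n := by
      rw [← hKr, mul_pow]
      ring
    rw [this]
    calc ‖y₀‖ * (2⁻¹ : ℝ) ^ n ≤ ‖y₀‖ * 1 := by
          apply mul_le_mul_of_nonneg_left _ (norm_nonneg _)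
          exact pow_le_one₀ (by norm_num) (by norm_num)
      _ = ‖y₀‖ := mul_one _
  have hradius : 0 < p.radius := lt_of_lt_of_le (by exact_mod_cast hr0) hrle
  have hball := p.hasFPowerSeriesOnBall hradius
  set F : ℂ → Z := fun z => p.sum (z - l) with hF
  have hFball : HasFPowerSeriesOnBall F p (0 + l) p.radius := hball.comp_sub l
  have hsub : Metric.ball l (r : ℝ) ⊆ EMetric.ball (0 + l) p.radius := by
    rw [zero_add, ← Metric.emetric_ball_nnreal]
    exact EMetric.ball_subset_ball hrle
  have hana : AnalyticOnNhd ℂ F (Metric.ball l (r : ℝ)) :=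
    hFball.analyticOnNhd.mono hsub
  have hsum : ∀ μ ∈ Metric.ball l (r : ℝ),
      HasSum (fun n => (μ - l) ^ n • y n) (F μ) := by
    intro μ hμ
    have hw : (μ - l) ∈ EMetric.ball (0 : ℂ) p.radius := by
      refine EMetric.ball_subset_ball hrle ?_
      rw [Metric.emetric_ball_nnreal]
      simpa [dist_eq_norm] using hμ
    have := hFball.hasSum hw
    have h0 : (0 : ℂ) + l + (μ - l) = μ := by ring
    rw [h0] at this
    convert this using 2 with n
    simp [hp, Finset.prod_const]
  have key : ∀ μ ∈ Metric.ball l (r : ℝ), (T - μ • 1) (F μ) = 0 := by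
    intro μ hμ
    set w : ℂ := μ - l with hw
    have h1 := hsum μ hμ
    have h2 : HasSum (fun n => w ^ n • ((T - l • 1) (y n))) ((T - l • 1) (F μ)) := by
      have := (T - l • 1).hasSum h1
      convert this using 2 with n
      simp [map_smul, hw]
    have h3 : HasSum (fun n => w ^ (n + 1) • y n) (w • F μ) := by
      have := h1.const_smul w
      convert this using 2 with n
      rw [smul_smul, pow_succ']
    have h2' : HasSum (fun n => w ^ n • ((T - l • 1) (y n)))
        ((T - l • 1) (F μ) + ∑ i ∈ Finset.range 1, w ^ i • ((T - l • 1) (y i))) := by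
      have hy₀' : T y₀ - l • y₀ = 0 := by simpa using hy₀
      simpa [hy0, hy₀'] using h2
    have h4 : HasSum (fun n => w ^ (n + 1) • y n) ((T - l • 1) (F μ)) := by
      have := (hasSum_nat_add_iff (f := fun n => w ^ n • ((T - l • 1) (y n))) 1).mpr h2'
      convert this using 2 with n
      rw [hystep]
    have heq : (T - l • 1) (F μ) = w • F μ := h4.unique h3
    have : (T - μ • 1) (F μ) = (T - l • 1) (F μ) - w • F μ := by
      simp only [ContinuousLinearMap.sub_apply, ContinuousLinearMap.smul_apply,
        ContinuousLinearMap.one_apply, hw]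
      rw [sub_smul]
      abel
    rw [this, heq, sub_self]
  intro hsvep
  have hmem : l ∈ Metric.ball l (r : ℝ) := Metric.mem_ball_self hr0
  have hzero := hsvep (Metric.ball l (r : ℝ)) Metric.isOpen_ball hmem F hana key l hmem
  have hFl : F l = y₀ := by
    have h1 := hsum l hmem
    have h2 : HasSum (fun n => ((l : ℂ) - l) ^ n • y n) y₀ := by
      have : ∀ n ≠ 0, ((l : ℂ) - l) ^ n • y n = 0 := by
        intro n hn
        simp [sub_self, zero_pow hn]
      have := hasSum_single (f := fun n => ((l : ℂ) - l) ^ n • y n) 0 this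
      simpa [hy0] using this
    exact h1.unique h2
  rw [hzero] at hFl
  exact hne hFl.symm

end Aux

section Aux2

variable {X : Type*} [NormedAddCommGroup X] [NormedSpace ℂ X] [CompleteSpace X]

lemma dual_surj_of_bounded_below (S : X →L[ℂ] X) {M : ℝ}
    (hlow : ∀ x, ‖x‖ ≤ M * ‖S x‖) :
    ∀ f : X →L[ℂ] ℂ, ∃ g : X →L[ℂ] ℂ, g.comp S = f := by
  have hinj : Function.Injective S := by
    intro a b hab
    have h0 : S (a - b) = 0 := by rw [map_sub, hab, sub_self]
    have h1 := hlow (a - b)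
    rw [h0, norm_zero, mul_zero] at h1
    exact sub_eq_zero.mp (norm_le_zero_iff.mp h1)
  intro f
  set Sₗ : X →ₗ[ℂ] X := (S : X →ₗ[ℂ] X) with hSl
  have hinjₗ : Function.Injective Sₗ := hinj
  set p : Submodule ℂ X := LinearMap.range Sₗ with hpdef
  set e := LinearEquiv.ofInjective Sₗ hinjₗ with he
  have hse : ∀ z : p, Sₗ (e.symm z) = (z : X) := by
    intro z
    conv_rhs => rw [← e.apply_symm_apply z]
    rw [he, LinearEquiv.ofInjective_apply]
  have hbound : ∀ z : p,
      ‖((f : X →ₗ[ℂ] ℂ).comp (e.symm : p →ₗ[ℂ] X)) z‖ ≤ (‖f‖ * M) * ‖z‖ := by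
    intro z
    have h2 : ‖(e.symm z : X)‖ ≤ M * ‖(z : X)‖ := by
      have h3 := hlow (e.symm z)
      rwa [show S (e.symm z) = (z : X) from hse z] at h3
    calc ‖((f : X →ₗ[ℂ] ℂ).comp (e.symm : p →ₗ[ℂ] X)) z‖
        = ‖f (e.symm z)‖ := rfl
      _ ≤ ‖f‖ * ‖(e.symm z : X)‖ := f.le_opNorm _
      _ ≤ ‖f‖ * (M * ‖(z : X)‖) := mul_le_mul_of_nonneg_left h2 (norm_nonneg f)
      _ = (‖f‖ * M) * ‖z‖ := by rw [mul_assoc, Submodule.coe_norm]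
  set φ : p →L[ℂ] ℂ :=
    LinearMap.mkContinuous ((f : X →ₗ[ℂ] ℂ).comp (e.symm : p →ₗ[ℂ] X)) (‖f‖ * M) hbound with hφ
  obtain ⟨g, hg, -⟩ := exists_extension_norm_eq p φ
  refine ⟨g, ?_⟩
  ext x
  have hx : Sₗ x ∈ p := ⟨x, rfl⟩
  have h4 : (⟨Sₗ x, hx⟩ : p) = e x := by
    apply Subtype.ext
    simp [he, LinearEquiv.ofInjective_apply]
  calc (g.comp S) x = g ((⟨Sₗ x, hx⟩ : p) : X) := rfl
    _ = φ ⟨Sₗ x, hx⟩ := hg _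
    _ = f (e.symm ⟨Sₗ x, hx⟩) := rfl
    _ = f x := by rw [h4, e.symm_apply_apply]

lemma dual_ker_of_not_dense (S : X →L[ℂ] X) {M : ℝ}
    (hlow : ∀ x, ‖x‖ ≤ M * ‖S x‖) (hns : ¬ Function.Surjective ⇑S) :
    ∃ f : X →L[ℂ] ℂ, f ≠ 0 ∧ f.comp S = 0 := by
  simp only [Function.Surjective, not_forall, not_exists] at hns
  obtain ⟨x₀, hx₀⟩ := hns
  set p : Submodule ℂ X := LinearMap.range (S : X →ₗ[ℂ] X) with hpdef
  have hanti : AntilipschitzWith M.toNNReal S := by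
    apply S.antilipschitz_of_bound
    intro x
    refine (hlow x).trans ?_
    exact mul_le_mul_of_nonneg_right (Real.le_coe_toNNReal M) (norm_nonneg _)
  have hclosed : IsClosed (p : Set X) := by
    have h1 := hanti.isClosed_range S.uniformContinuous
    have h2 : (p : Set X) = Set.range S := by
      ext v
      simp [hpdef, LinearMap.mem_range, Set.mem_range]
    rwa [h2]
  set q : X →ₗ[ℂ] X ⧸ p := p.mkQ with hq
  have hqb : ∀ x, ‖q x‖ ≤ 1 * ‖x‖ := fun x => by
    rw [one_mul]; exact Submodule.Quotient.norm_mk_le p x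
  set Q : X →L[ℂ] X ⧸ p := LinearMap.mkContinuous q 1 hqb with hQ
  have hmkne : ‖Q x₀‖ ≠ 0 := by
    intro h0
    have hx₀p : x₀ ∈ p := by rw [← SetLike.mem_coe, ← hclosed.closure_eq]; exact (QuotientAddGroup.norm_mk_eq_zero_iff_mem_closure (S := p.toAddSubgroup) (m := x₀)).mp h0
    obtain ⟨x, hx⟩ := hx₀p
    exact hx₀ x hx
  have hQx₀ : Q x₀ ≠ 0 := fun hh => hmkne (by rw [hh, norm_zero])
  obtain ⟨g, -, hgx⟩ := exists_dual_vector ℂ (Q x₀) hmkne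
  refine ⟨g.comp Q, ?_, ?_⟩
  · intro hzero
    have h5 : g (Q x₀) = 0 := by
      have := DFunLike.congr_fun hzero x₀
      simpa using this
    rw [hgx] at h5
    exact hmkne (Complex.ofReal_eq_zero.mp h5)
  · ext x
    have hx : Q (S x) = 0 := by
      have hmem : S x ∈ p := ⟨x, rfl⟩
      exact (Submodule.Quotient.mk_eq_zero p).mpr hmem
    simp [ContinuousLinearMap.comp_apply, hx]

variable {Y : Type*} [NormedAddCommGroup Y] [NormedSpace ℂ Y] [CompleteSpace Y]

set_option synthInstance.maxHeartbeats 1000000 in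
set_option maxHeartbeats 1000000 in
lemma spec_MC_eq (A : X →L[ℂ] X) (B : Y →L[ℂ] Y)
    (h : PBW.svepFail (PBW.dualOp A) ∩ PBW.svepFail B = ∅) (C : Y →L[ℂ] X) :
    spectrum ℂ (PBW.MC A B C) = spectrum ℂ A ∪ spectrum ℂ B := by
  ext l
  simp only [Set.mem_union]
  have hGz : ∀ z : X × Y, (algebraMap ℂ ((X × Y) →L[ℂ] (X × Y)) l - PBW.MC A B C) z
      = ((algebraMap ℂ (X →L[ℂ] X) l - A) z.1 - C z.2,
         (algebraMap ℂ (Y →L[ℂ] Y) l - B) z.2) := by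
    intro z
    have h1 : PBW.MC A B C z = (A z.1 + C z.2, B z.2) := rfl
    simp [h1, Algebra.algebraMap_eq_smul_one, Prod.ext_iff, sub_sub,
      Prod.smul_fst, Prod.smul_snd]
  constructor
  · intro hMCl
    by_contra hcon
    push_neg at hcon
    obtain ⟨hA, hB⟩ := hcon
    rw [spectrum.notMem_iff] at hA hB
    obtain ⟨uA, huA⟩ := hA
    obtain ⟨uB, huB⟩ := hB
    set P : X →L[ℂ] X := ↑uA⁻¹ with hPdef
    set Q : Y →L[ℂ] Y := ↑uB⁻¹ with hQdef
    have hP1 : ∀ v, (algebraMap ℂ (X →L[ℂ] X) l - A) (P v) = v := by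
      intro v
      have := DFunLike.congr_fun uA.mul_inv v
      simpa [huA, ContinuousLinearMap.mul_apply] using this
    have hP2 : ∀ v, P ((algebraMap ℂ (X →L[ℂ] X) l - A) v) = v := by
      intro v
      have := DFunLike.congr_fun uA.inv_mul v
      simpa [huA, ContinuousLinearMap.mul_apply] using this
    have hQ1 : ∀ v, (algebraMap ℂ (Y →L[ℂ] Y) l - B) (Q v) = v := by
      intro v
      have := DFunLike.congr_fun uB.mul_inv v
      simpa [huB, ContinuousLinearMap.mul_apply] using this
    have hQ2 : ∀ v, Q ((algebraMap ℂ (Y →L[ℂ] Y) l - B) v) = v := by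
      intro v
      have := DFunLike.congr_fun uB.inv_mul v
      simpa [huB, ContinuousLinearMap.mul_apply] using this
    rw [spectrum.mem_iff] at hMCl
    apply hMCl
    set G : (X × Y) →L[ℂ] (X × Y) := algebraMap ℂ _ l - PBW.MC A B C with hGdef
    set N : (X × Y) →L[ℂ] (X × Y) := PBW.MC P Q (P.comp (C.comp Q)) with hNdef
    have hNz : ∀ z : X × Y, N z = (P z.1 + P (C (Q z.2)), Q z.2) := fun z => rfl
    refine ⟨⟨G, N, ?_, ?_⟩, rfl⟩
    · refine ContinuousLinearMap.ext fun z => ?_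
      rw [ContinuousLinearMap.mul_apply, ContinuousLinearMap.one_apply, hNz, hGz]
      simp only [map_add, hP1, hQ1]
      simp
    · refine ContinuousLinearMap.ext fun z => ?_
      rw [ContinuousLinearMap.mul_apply, ContinuousLinearMap.one_apply, hGz, hNz]
      simp only [hQ2, map_sub, hP2]
      simp
  · intro hl
    by_contra hMCl
    rw [spectrum.notMem_iff] at hMCl
    obtain ⟨u, hu⟩ := hMCl
    set V : (X × Y) →L[ℂ] (X × Y) := ↑u⁻¹ with hVdef
    have hVG : ∀ z, V ((algebraMap ℂ ((X × Y) →L[ℂ] (X × Y)) l - PBW.MC A B C) z) = z := by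
      intro z
      have := DFunLike.congr_fun u.inv_mul z
      simpa [hu, ContinuousLinearMap.mul_apply] using this
    have hGV : ∀ z, (algebraMap ℂ ((X × Y) →L[ℂ] (X × Y)) l - PBW.MC A B C) (V z) = z := by
      intro z
      have := DFunLike.congr_fun u.mul_inv z
      simpa [hu, ContinuousLinearMap.mul_apply] using this
    have hlow : ∀ x : X, ‖x‖ ≤ ‖V‖ * ‖(algebraMap ℂ (X →L[ℂ] X) l - A) x‖ := by
      intro x
      have h1 : (algebraMap ℂ ((X × Y) →L[ℂ] (X × Y)) l - PBW.MC A B C) ((x : X), (0 : Y))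
          = ((algebraMap ℂ (X →L[ℂ] X) l - A) x, 0) := by rw [hGz]; simp
      have h2 : V ((algebraMap ℂ (X →L[ℂ] X) l - A) x, (0 : Y)) = (x, 0) := by
        rw [← h1, hVG]
      calc ‖x‖ ≤ ‖((x : X), (0 : Y))‖ := by rw [Prod.norm_def]; exact le_max_left _ _
        _ = ‖V ((algebraMap ℂ (X →L[ℂ] X) l - A) x, (0 : Y))‖ := by rw [h2]
        _ ≤ ‖V‖ * ‖((algebraMap ℂ (X →L[ℂ] X) l - A) x, (0 : Y))‖ := V.le_opNorm _
        _ = ‖V‖ * ‖(algebraMap ℂ (X →L[ℂ] X) l - A) x‖ := by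
            congr 1
            rw [Prod.norm_def]
            simp
    have hinjA : Function.Injective ⇑(algebraMap ℂ (X →L[ℂ] X) l - A) := by
      intro a b hab
      have h1 := hlow (a - b)
      rw [map_sub, hab, sub_self, norm_zero, mul_zero] at h1
      exact sub_eq_zero.mp (norm_le_zero_iff.mp h1)
    have hsurjB : Function.Surjective ⇑(algebraMap ℂ (Y →L[ℂ] Y) l - B) := by
      intro y'
      refine ⟨(V ((0 : X), y')).2, ?_⟩
      have h1 := hGV ((0 : X), y')
      rw [hGz] at h1
      exact congrArg Prod.snd h1
    have claim1 : l ∉ spectrum ℂ A → l ∉ spectrum ℂ B := by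
      intro hA
      rw [spectrum.notMem_iff] at hA ⊢
      obtain ⟨uA, huA⟩ := hA
      have hinjB : Function.Injective ⇑(algebraMap ℂ (Y →L[ℂ] Y) l - B) := by
        intro a b hab
        have hz : (algebraMap ℂ (Y →L[ℂ] Y) l - B) (a - b) = 0 := by
          rw [map_sub, hab, sub_self]
        have hA1 : ∀ v, (algebraMap ℂ (X →L[ℂ] X) l - A) ((↑uA⁻¹ : X →L[ℂ] X) v) = v := by
          intro v
          have := DFunLike.congr_fun uA.mul_inv v
          simpa [huA, ContinuousLinearMap.mul_apply] using this
        set x : X := (↑uA⁻¹ : X →L[ℂ] X) (C (a - b)) with hxdef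
        have hax : (algebraMap ℂ (X →L[ℂ] X) l - A) x = C (a - b) := hA1 _
        have hGxy : (algebraMap ℂ ((X × Y) →L[ℂ] (X × Y)) l - PBW.MC A B C) (x, a - b)
            = 0 := by
          rw [hGz]
          simp only [hax, hz]
          simp [Prod.ext_iff]
        have h1 := hVG (x, a - b)
        rw [hGxy, map_zero] at h1
        have h2 : a - b = 0 := (congrArg Prod.snd h1).symm
        exact sub_eq_zero.mp h2
      exact isUnit_of_bijective hinjB hsurjB
    have claim2 : l ∉ spectrum ℂ B → l ∉ spectrum ℂ A := by
      intro hB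
      rw [spectrum.notMem_iff] at hB ⊢
      obtain ⟨uB, huB⟩ := hB
      have hsurjA : Function.Surjective ⇑(algebraMap ℂ (X →L[ℂ] X) l - A) := by
        intro x'
        set z := V (x', (0 : Y)) with hzdef
        have hGVz := hGV (x', (0 : Y))
        rw [hGz] at hGVz
        have h2 : (algebraMap ℂ (Y →L[ℂ] Y) l - B) z.2 = 0 := congrArg Prod.snd hGVz
        have hz2 : z.2 = 0 := by
          have h3 := DFunLike.congr_fun uB.inv_mul z.2
          rw [ContinuousLinearMap.mul_apply] at h3
          rw [huB] at h3
          rw [h2, map_zero] at h3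
          exact h3.symm
        refine ⟨z.1, ?_⟩
        have h1 : (algebraMap ℂ (X →L[ℂ] X) l - A) z.1 - C z.2 = x' :=
          congrArg Prod.fst hGVz
        rw [hz2, map_zero, sub_zero] at h1
        exact h1
      exact isUnit_of_bijective hinjA hsurjA
    have hlA : l ∈ spectrum ℂ A := by
      by_contra hA
      rcases hl with h' | h'
      · exact hA h'
      · exact claim1 hA h'
    have hlB : l ∈ spectrum ℂ B := by
      by_contra hB
      exact (claim2 hB) hlA
    have hBneg : ∀ v, (B - l • 1) v = -((algebraMap ℂ (Y →L[ℂ] Y) l - B) v) := by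
      intro v
      simp [Algebra.algebraMap_eq_smul_one]
    have hsurjB' : Function.Surjective ⇑(B - l • (1 : Y →L[ℂ] Y)) := by
      intro y'
      obtain ⟨y, hy⟩ := hsurjB (-y')
      exact ⟨y, by rw [hBneg, hy, neg_neg]⟩
    have hkerB : ∃ y₀ : Y, (B - l • (1 : Y →L[ℂ] Y)) y₀ = 0 ∧ y₀ ≠ 0 := by
      by_contra hk
      push_neg at hk
      have hinjB : Function.Injective ⇑(algebraMap ℂ (Y →L[ℂ] Y) l - B) := by
        intro a b hab
        have hz : (algebraMap ℂ (Y →L[ℂ] Y) l - B) (a - b) = 0 := by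
          rw [map_sub, hab, sub_self]
        have hz' : (B - l • (1 : Y →L[ℂ] Y)) (a - b) = 0 := by
          rw [hBneg, hz, neg_zero]
        exact sub_eq_zero.mp (hk (a - b) hz')
      exact (spectrum.notMem_iff.mpr (isUnit_of_bijective hinjB hsurjB)) hlB
    obtain ⟨y₀, hy₀, hy₀ne⟩ := hkerB
    have hfailB : ¬ PBW.HasSVEPAt B l := not_hasSVEPAt_of B l hsurjB' hy₀ hy₀ne
    set S : X →L[ℂ] X := A - l • 1 with hSdef
    have hSneg : ∀ x, S x = -((algebraMap ℂ (X →L[ℂ] X) l - A) x) := by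
      intro x
      simp [hSdef, Algebra.algebraMap_eq_smul_one]
    have hlowS : ∀ x, ‖x‖ ≤ ‖V‖ * ‖S x‖ := by
      intro x
      rw [hSneg, norm_neg]
      exact hlow x
    have hnsS : ¬ Function.Surjective ⇑S := by
      intro hsurjS
      have hsurjA : Function.Surjective ⇑(algebraMap ℂ (X →L[ℂ] X) l - A) := by
        intro x'
        obtain ⟨x, hx⟩ := hsurjS (-x')
        rw [hSneg] at hx
        exact ⟨x, by rw [← neg_neg ((algebraMap ℂ (X →L[ℂ] X) l - A) x), hx, neg_neg]⟩
      exact (spectrum.notMem_iff.mpr (isUnit_of_bijective hinjA hsurjA)) hlA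
    have hdual_apply : ∀ f : StrongDual ℂ X,
        (PBW.dualOp A - l • (1 : StrongDual ℂ X →L[ℂ] StrongDual ℂ X)) f
          = f.comp S := by
      intro f
      ext x
      simp [PBW.dualOp, hSdef, map_sub, map_smul, smul_eq_mul]
    have hsurjDual : Function.Surjective
        ⇑(PBW.dualOp A - l • (1 : StrongDual ℂ X →L[ℂ] StrongDual ℂ X)) := by
      intro f
      obtain ⟨g, hg⟩ := dual_surj_of_bounded_below S hlowS f
      exact ⟨g, by rw [hdual_apply]; exact hg⟩
    obtain ⟨f₀, hf₀ne, hf₀⟩ := dual_ker_of_not_dense S hlowS hnsS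
    have hfailA : ¬ PBW.HasSVEPAt (PBW.dualOp A) l :=
      not_hasSVEPAt_of (PBW.dualOp A) l hsurjDual
        (by rw [hdual_apply]; exact hf₀) hf₀ne
    have hmem : l ∈ PBW.svepFail (PBW.dualOp A) ∩ PBW.svepFail B := ⟨hfailA, hfailB⟩
    rw [h] at hmem
    exact hmem

end Aux2

set_option synthInstance.maxHeartbeats 1000000 in
set_option maxHeartbeats 1000000 in
/-- if `S(A*) ∩ S(B) = ∅` then `σ_gD(M_C) = σ_gD(A) ∪ σ_gD(B)` for every `C`. -/
theorem stmt11 {X Y : Type*} [NormedAddCommGroup X] [NormedSpace ℂ X] [CompleteSpace X]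
    [NormedAddCommGroup Y] [NormedSpace ℂ Y] [CompleteSpace Y]
    (A : X →L[ℂ] X) (B : Y →L[ℂ] Y)
    (h : PBW.svepFail (PBW.dualOp A) ∩ PBW.svepFail B = ∅) :
    ∀ C : Y →L[ℂ] X,
      PBW.gDSpectrum (PBW.MC A B C) = PBW.gDSpectrum A ∪ PBW.gDSpectrum B := by
  intro C
  have hspec := spec_MC_eq A B h C
  unfold PBW.gDSpectrum
  rw [hspec]
  ext l
  simp only [Set.mem_setOf_eq, Set.mem_union, ← Filter.sup_principal, accPt_sup]
end
end

section
/- Let A ∈ L(X), B ∈ L(Y), C ∈ L(Y,X). If σ_pBW(M_C) = σ_pBW(A) ∪ σ_pBW(B), then σ_gD(M_C) = σ_gD(A) ∪ σ_gD(B). -/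
open Filter Set ContinuousLinearMap

noncomputable section

namespace PBW

open scoped ENNReal NNReal

section Aux

variable {Z : Type*} [NormedAddCommGroup Z] [NormedSpace ℂ Z]

lemma restrictOp_apply {X : Type*} [NormedAddCommGroup X] [NormedSpace ℂ X]
    (T : X →L[ℂ] X) (U : Submodule ℂ X) (h : ∀ x ∈ U, T x ∈ U) (x : U) :
    (restrictOp T U h x : X) = T x := rfl

/-- Gelfand formula contradiction: a quasinilpotent operator cannot have `‖T^n‖ ≥ c^n`. -/
lemma quasinil_gelfand_contradiction [CompleteSpace Z] [Nontrivial Z] (T : Z →L[ℂ] Z)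
    (hq : IsQuasinilpotentOp T) {c : ℝ≥0} (hc : 0 < c)
    (hn : ∀ n : ℕ, (c : ℝ) ^ n ≤ ‖T ^ n‖) : False := by
  have hrad : spectralRadius ℂ T = 0 := by
    refine le_antisymm ?_ zero_le
    refine iSup₂_le fun l hl => ?_
    have hl0 : l = 0 := hq hl
    simp [hl0]
  have hT := spectrum.pow_nnnorm_pow_one_div_tendsto_nhds_spectralRadius T
  rw [hrad] at hT
  have hge : ∀ᶠ n : ℕ in Filter.atTop,
      (c : ℝ≥0∞) ≤ (‖T ^ n‖₊ : ℝ≥0∞) ^ (1 / (n : ℕ) : ℝ) := by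
    filter_upwards [Filter.eventually_ge_atTop 1] with n hn1
    have h2 : (c ^ n : ℝ≥0) ≤ ‖T ^ n‖₊ := by
      rw [← NNReal.coe_le_coe]
      push_cast
      exact hn n
    have h1 : (c : ℝ≥0∞) ^ n ≤ (‖T ^ n‖₊ : ℝ≥0∞) := by exact_mod_cast h2
    have h3 := ENNReal.rpow_le_rpow h1 (by positivity : (0:ℝ) ≤ 1 / (n:ℝ))
    have hne : (n : ℝ) ≠ 0 := by exact_mod_cast Nat.one_le_iff_ne_zero.mp hn1
    calc (c : ℝ≥0∞) = ((c : ℝ≥0∞) ^ n) ^ (1 / (n:ℝ)) := by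
          rw [← ENNReal.rpow_natCast (c : ℝ≥0∞) n, ← ENNReal.rpow_mul,
            mul_one_div_cancel hne, ENNReal.rpow_one]
      _ ≤ (‖T ^ n‖₊ : ℝ≥0∞) ^ (1 / (n:ℝ)) := h3
  have hle : (c : ℝ≥0∞) ≤ 0 := ge_of_tendsto hT hge
  simp only [nonpos_iff_eq_zero, ENNReal.coe_eq_zero] at hle
  exact hc.ne' hle

lemma pow_bddBelow (T : Z →L[ℂ] Z) {c : ℝ} (hc : 0 ≤ c)
    (h : ∀ x, c * ‖x‖ ≤ ‖T x‖) : ∀ (n : ℕ) (x : Z), c ^ n * ‖x‖ ≤ ‖(T ^ n) x‖ := by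
  intro n
  induction n with
  | zero => intro x; simp
  | succ n ih =>
    intro x
    have h1 : c ^ (n + 1) * ‖x‖ = c ^ n * (c * ‖x‖) := by ring
    have h2 : c ^ n * (c * ‖x‖) ≤ c ^ n * ‖T x‖ :=
      mul_le_mul_of_nonneg_left (h x) (pow_nonneg hc n)
    have h3 : c ^ n * ‖T x‖ ≤ ‖(T ^ n) (T x)‖ := ih (T x)
    have h4 : (T ^ (n + 1)) x = (T ^ n) (T x) := by
      rw [pow_succ, ContinuousLinearMap.mul_apply]
    rw [h4, h1]
    exact h2.trans h3

lemma subsingleton_of_quasinil_bddBelow [CompleteSpace Z] (T : Z →L[ℂ] Z)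
    (hq : IsQuasinilpotentOp T) {c : ℝ} (hc : 0 < c) (hb : ∀ x, c * ‖x‖ ≤ ‖T x‖) :
    Subsingleton Z := by
  by_contra hns
  rw [not_subsingleton_iff_nontrivial] at hns
  obtain ⟨x, hx⟩ := exists_ne (0 : Z)
  have hxn : 0 < ‖x‖ := norm_pos_iff.mpr hx
  refine quasinil_gelfand_contradiction T hq (c := ⟨c, hc.le⟩) (by exact_mod_cast hc) ?_
  intro n
  have h1 : c ^ n * ‖x‖ ≤ ‖(T ^ n) x‖ := pow_bddBelow T hc.le hb n x
  have h2 : ‖(T ^ n) x‖ ≤ ‖T ^ n‖ * ‖x‖ := (T ^ n).le_opNorm x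
  have : c ^ n * ‖x‖ ≤ ‖T ^ n‖ * ‖x‖ := h1.trans h2
  exact le_of_mul_le_mul_right (by exact this) hxn

lemma subsingleton_of_quasinil_surjective [CompleteSpace Z] (T : Z →L[ℂ] Z)
    (hq : IsQuasinilpotentOp T) (hs : Function.Surjective T) : Subsingleton Z := by
  by_contra hns
  rw [not_subsingleton_iff_nontrivial] at hns
  obtain ⟨C, hC0, hC⟩ := T.exists_preimage_norm_le hs
  have key : ∀ (n : ℕ) (y : Z), ∃ x, (T ^ n) x = y ∧ ‖x‖ ≤ C ^ n * ‖y‖ := by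
    intro n
    induction n with
    | zero => intro y; exact ⟨y, by simp, by simp⟩
    | succ n ih =>
      intro y
      obtain ⟨x, hx, hxn⟩ := ih y
      obtain ⟨z, hz, hzn⟩ := hC x
      refine ⟨z, ?_, ?_⟩
      · rw [pow_succ, ContinuousLinearMap.mul_apply, hz, hx]
      · calc ‖z‖ ≤ C * ‖x‖ := hzn
          _ ≤ C * (C ^ n * ‖y‖) := mul_le_mul_of_nonneg_left hxn hC0.le
          _ = C ^ (n + 1) * ‖y‖ := by ring
  obtain ⟨y, hy⟩ := exists_ne (0 : Z)
  have hyn : 0 < ‖y‖ := norm_pos_iff.mpr hy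
  refine quasinil_gelfand_contradiction T hq (c := Real.toNNReal C⁻¹)
    (Real.toNNReal_pos.mpr (inv_pos.mpr hC0)) ?_
  intro n
  rw [Real.coe_toNNReal _ (inv_pos.mpr hC0).le, inv_pow]
  obtain ⟨x, hx, hxn⟩ := key n y
  have h1 : ‖y‖ ≤ ‖T ^ n‖ * ‖x‖ := by
    rw [← hx]; exact (T ^ n).le_opNorm x
  have h2 : ‖y‖ ≤ ‖T ^ n‖ * (C ^ n * ‖y‖) :=
    h1.trans (mul_le_mul_of_nonneg_left hxn (norm_nonneg _))
  have hCn : (0:ℝ) < C ^ n := pow_pos hC0 n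
  have h3 : (C ^ n)⁻¹ * ‖y‖ ≤ ‖T ^ n‖ * ‖y‖ := by
    rw [inv_mul_le_iff₀ hCn] at *
    nlinarith [norm_nonneg (T ^ n)]
  exact le_of_mul_le_mul_right (by simpa using h3) hyn

lemma finite_of_subsingleton {R M : Type*} [Semiring R] [AddCommMonoid M] [Module R M]
    [Subsingleton M] : Module.Finite R M :=
  Module.Finite.of_surjective (0 : R →ₗ[R] M) fun m => ⟨0, Subsingleton.elim _ _⟩

end Aux

section Main

variable {X : Type*} [NormedAddCommGroup X] [NormedSpace ℂ X]

lemma bijective_of_pseudoBWeyl_bddBelow [CompleteSpace X] (T : X →L[ℂ] X)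
    (hp : IsPseudoBWeyl T) {c : ℝ} (hc : 0 < c) (hb : ∀ x, c * ‖x‖ ≤ ‖T x‖) :
    Function.Bijective T := by
  obtain ⟨X₁, X₂, h₁, h₂, hcl₁, hcl₂, hcompl, hW, hQ⟩ := hp
  haveI : CompleteSpace X₂ := hcl₂.completeSpace_coe
  have hinj : Function.Injective T := by
    intro a b hab
    have := hb (a - b)
    rw [map_sub, hab, sub_self, norm_zero] at this
    have h0 : ‖a - b‖ ≤ 0 := by nlinarith [norm_nonneg (a - b)]
    exact sub_eq_zero.mp (norm_le_zero_iff.mp h0)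
  -- X₂ is trivial
  haveI hX₂sub : Subsingleton X₂ := by
    refine subsingleton_of_quasinil_bddBelow _ hQ hc fun x => ?_
    have : ‖(restrictOp T X₂ h₂ x : X)‖ = ‖T (x : X)‖ := rfl
    show c * ‖(x : X)‖ ≤ ‖(restrictOp T X₂ h₂ x : X)‖
    rw [this]
    exact hb x
  have hX₂bot : X₂ = ⊥ := Submodule.eq_bot_of_subsingleton
  have hX₁top : X₁ = ⊤ := by
    have := hcompl.sup_eq_top
    rwa [hX₂bot, sup_bot_eq] at this
  -- the Weyl part is injective, hence surjective
  set W := restrictOp T X₁ h₁ with hWdef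
  have hWinj : Function.Injective W := by
    intro a b hab
    have : T (a : X) = T (b : X) := congrArg Subtype.val hab
    exact Subtype.ext (hinj this)
  have hker : LinearMap.ker (W : X₁ →ₗ[ℂ] X₁) = ⊥ := LinearMap.ker_eq_bot.mpr hWinj
  have hfr : Module.finrank ℂ (LinearMap.ker (W : X₁ →ₗ[ℂ] X₁)) = 0 := by
    rw [hker]; exact Module.finrank_zero_of_subsingleton
  obtain ⟨hWk, hWr, hWq, hWe⟩ := hW
  have hfq : Module.finrank ℂ (X₁ ⧸ LinearMap.range (W : X₁ →ₗ[ℂ] X₁)) = 0 := by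
    rw [← hWe]; exact hfr
  haveI := hWq
  have hqsub : Subsingleton (X₁ ⧸ LinearMap.range (W : X₁ →ₗ[ℂ] X₁)) := Module.finrank_zero_iff.mp hfq
  have hrange : LinearMap.range (W : X₁ →ₗ[ℂ] X₁) = ⊤ := Submodule.Quotient.subsingleton_iff.mp hqsub
  have hsurj : Function.Surjective T := by
    intro y
    have hy : y ∈ X₁ := hX₁top ▸ Submodule.mem_top
    have : (⟨y, hy⟩ : X₁) ∈ LinearMap.range (W : X₁ →ₗ[ℂ] X₁) := hrange ▸ Submodule.mem_top
    obtain ⟨w, hw⟩ := this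
    exact ⟨(w : X), congrArg Subtype.val hw⟩
  exact ⟨hinj, hsurj⟩

lemma bijective_of_pseudoBWeyl_surjective [CompleteSpace X] (T : X →L[ℂ] X)
    (hp : IsPseudoBWeyl T) (hs : Function.Surjective T) : Function.Bijective T := by
  obtain ⟨X₁, X₂, h₁, h₂, hcl₁, hcl₂, hcompl, hW, hQ⟩ := hp
  haveI : CompleteSpace X₂ := hcl₂.completeSpace_coe
  -- decomposition of elements
  have hdec : ∀ z : X, ∃ z₁ ∈ X₁, ∃ z₂ ∈ X₂, z = z₁ + z₂ := by
    intro z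
    have hz : z ∈ X₁ ⊔ X₂ := hcompl.sup_eq_top ▸ Submodule.mem_top
    obtain ⟨z₁, hz₁, z₂, hz₂, hzz⟩ := Submodule.mem_sup.mp hz
    exact ⟨z₁, hz₁, z₂, hz₂, hzz.symm⟩
  have hdisj : ∀ x : X, x ∈ X₁ → x ∈ X₂ → x = 0 :=
    fun x hx₁ hx₂ => Submodule.disjoint_def.mp hcompl.disjoint x hx₁ hx₂
  -- the pieces of T z for any z
  have hpieces : ∀ z : X, ∀ y₁ ∈ X₁, ∀ y₂ ∈ X₂, T z = y₁ + y₂ →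
      ∃ z₁ ∈ X₁, ∃ z₂ ∈ X₂, T z₁ = y₁ ∧ T z₂ = y₂ := by
    intro z y₁ hy₁ y₂ hy₂ hz
    obtain ⟨z₁, hz₁, z₂, hz₂, rfl⟩ := hdec z
    have hTz : T z₁ + T z₂ = y₁ + y₂ := by rw [← map_add]; exact hz
    have hmem : T z₁ - y₁ ∈ X₁ := Submodule.sub_mem _ (h₁ z₁ hz₁) hy₁
    have hmem2 : T z₁ - y₁ ∈ X₂ := by
      have heq : T z₁ - y₁ = y₂ - T z₂ := by
        rw [sub_eq_sub_iff_add_eq_add, hTz]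
        abel
      rw [heq]
      exact Submodule.sub_mem _ hy₂ (h₂ z₂ hz₂)
    have h0 : T z₁ - y₁ = 0 := hdisj _ hmem hmem2
    have hz1 : T z₁ = y₁ := sub_eq_zero.mp h0
    have hz2 : T z₂ = y₂ := by
      rw [hz1] at hTz
      exact add_left_cancel hTz
    exact ⟨z₁, hz₁, z₂, hz₂, hz1, hz2⟩
  -- Q is surjective, so X₂ is trivial
  haveI hX₂sub : Subsingleton X₂ := by
    refine subsingleton_of_quasinil_surjective _ hQ ?_
    rintro ⟨y, hy⟩
    obtain ⟨z, hz⟩ := hs y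
    obtain ⟨z₁, hz₁, z₂, hz₂, -, hTz₂⟩ := hpieces z 0 (Submodule.zero_mem _) y hy
      (by rw [hz, zero_add])
    exact ⟨⟨z₂, hz₂⟩, Subtype.ext hTz₂⟩
  -- W is surjective
  set W := restrictOp T X₁ h₁ with hWdef
  have hWsurj : Function.Surjective W := by
    rintro ⟨y, hy⟩
    obtain ⟨z, hz⟩ := hs y
    obtain ⟨z₁, hz₁, z₂, hz₂, hTz₁, -⟩ := hpieces z y hy 0 (Submodule.zero_mem _)
      (by rw [hz, add_zero])
    exact ⟨⟨z₁, hz₁⟩, Subtype.ext hTz₁⟩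
  -- W Weyl + surjective ⟹ injective
  obtain ⟨hWk, hWr, hWq, hWe⟩ := hW
  have hrange : LinearMap.range (W : X₁ →ₗ[ℂ] X₁) = ⊤ := LinearMap.range_eq_top_of_surjective (W : X₁ →ₗ[ℂ] X₁) hWsurj
  have hqsub : Subsingleton (X₁ ⧸ LinearMap.range (W : X₁ →ₗ[ℂ] X₁)) :=
    Submodule.Quotient.subsingleton_iff.mpr hrange
  haveI := hWq
  have hfq : Module.finrank ℂ (X₁ ⧸ LinearMap.range (W : X₁ →ₗ[ℂ] X₁)) = 0 :=
    Module.finrank_zero_iff.mpr hqsub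
  have hfr : Module.finrank ℂ (LinearMap.ker (W : X₁ →ₗ[ℂ] X₁)) = 0 := by rw [hWe]; exact hfq
  haveI := hWk
  have hksub : Subsingleton (LinearMap.ker (W : X₁ →ₗ[ℂ] X₁)) := Module.finrank_zero_iff.mp hfr
  have hker : LinearMap.ker (W : X₁ →ₗ[ℂ] X₁) = ⊥ := Submodule.eq_bot_of_subsingleton
  have hWinj : Function.Injective W := LinearMap.ker_eq_bot.mp hker
  -- T is injective
  have hinj : Function.Injective T := by
    intro a b hab
    have hT0 : T (a - b) = 0 := by rw [map_sub, hab, sub_self]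
    obtain ⟨w₁, hw₁, w₂, hw₂, hww⟩ := hdec (a - b)
    -- w₂ = 0 since X₂ is a subsingleton
    have hw₂0 : w₂ = 0 := by
      have : (⟨w₂, hw₂⟩ : X₂) = (⟨0, Submodule.zero_mem _⟩ : X₂) := Subsingleton.elim _ _
      exact congrArg Subtype.val this
    -- hence T w₁ = 0, and w₁ = 0 by injectivity of W
    have hTw₁ : T w₁ = 0 := by
      have : T w₁ + T w₂ = 0 := by rw [← map_add, ← hww, hT0]
      rw [hw₂0, map_zero, add_zero] at this
      exact this
    have hw₁0 : w₁ = 0 := by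
      have hWw : W ⟨w₁, hw₁⟩ = W 0 := by
        apply Subtype.ext
        show T w₁ = T ((0 : X₁) : X)
        rw [hTw₁]
        simp
      have := hWinj hWw
      exact congrArg Subtype.val this
    have : a - b = 0 := by rw [hww, hw₁0, hw₂0, add_zero]
    exact sub_eq_zero.mp this
  exact ⟨hinj, hs⟩

lemma isUnit_of_bijective [CompleteSpace X] (T : X →L[ℂ] X) (h : Function.Bijective T) :
    IsUnit T := by
  let e := ContinuousLinearEquiv.ofBijective T (LinearMap.ker_eq_bot.mpr h.1)
    (LinearMap.range_eq_top_of_surjective _ h.2)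
  have he : ⇑e = ⇑T := ContinuousLinearEquiv.coeFn_ofBijective T _ _
  refine isUnit_iff_exists.mpr ⟨e.symm.toContinuousLinearMap, ?_, ?_⟩
  · ext x
    simp only [ContinuousLinearMap.mul_apply, ContinuousLinearMap.one_apply,
      ContinuousLinearEquiv.coe_coe]
    conv_lhs => rw [← he]
    exact e.apply_symm_apply x
  · ext x
    simp only [ContinuousLinearMap.mul_apply, ContinuousLinearMap.one_apply,
      ContinuousLinearEquiv.coe_coe]
    conv_lhs => rw [← he]
    exact e.symm_apply_apply x

lemma isUnit_sub_smul_iff (T : X →L[ℂ] X) (μ : ℂ) :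
    IsUnit (T - μ • 1) ↔ μ ∉ spectrum ℂ T := by
  rw [spectrum.notMem_iff, Algebra.algebraMap_eq_smul_one]
  constructor
  · intro h
    have := h.neg
    rwa [neg_sub] at this
  · intro h
    have := h.neg
    rwa [neg_sub] at this

lemma isPseudoBWeyl_of_bijective [CompleteSpace X] (T : X →L[ℂ] X)
    (hT : Function.Bijective T) : IsPseudoBWeyl T := by
  refine ⟨⊤, ⊥, fun x _ => Submodule.mem_top, fun x hx => ?_, ?_, ?_, isCompl_top_bot, ?_, ?_⟩
  · rw [Submodule.mem_bot] at hx ⊢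
    rw [hx, map_zero]
  · rw [Submodule.top_coe]; exact isClosed_univ
  · rw [Submodule.bot_coe]; exact isClosed_singleton
  · -- Weyl on ⊤
    set W := restrictOp T ⊤ (fun x _ => Submodule.mem_top) with hWdef
    have hWinj : Function.Injective W := by
      intro a b hab
      exact Subtype.ext (hT.1 (congrArg Subtype.val hab))
    have hWsurj : Function.Surjective W := by
      rintro ⟨y, hy⟩
      obtain ⟨x, hx⟩ := hT.2 y
      exact ⟨⟨x, Submodule.mem_top⟩, Subtype.ext hx⟩
    have hker : LinearMap.ker (W : (⊤ : Submodule ℂ X) →ₗ[ℂ] (⊤ : Submodule ℂ X)) = ⊥ := LinearMap.ker_eq_bot.mpr hWinj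
    have hrange : LinearMap.range (W : (⊤ : Submodule ℂ X) →ₗ[ℂ] (⊤ : Submodule ℂ X)) = ⊤ := LinearMap.range_eq_top_of_surjective (W : (⊤ : Submodule ℂ X) →ₗ[ℂ] (⊤ : Submodule ℂ X)) hWsurj
    haveI hks : Subsingleton (LinearMap.ker (W : (⊤ : Submodule ℂ X) →ₗ[ℂ] (⊤ : Submodule ℂ X))) := by rw [hker]; infer_instance
    haveI hqs : Subsingleton ((⊤ : Submodule ℂ X) ⧸ LinearMap.range (W : (⊤ : Submodule ℂ X) →ₗ[ℂ] (⊤ : Submodule ℂ X))) :=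
      Submodule.Quotient.subsingleton_iff.mpr hrange
    haveI : Module.Finite ℂ (LinearMap.ker (W : (⊤ : Submodule ℂ X) →ₗ[ℂ] (⊤ : Submodule ℂ X))) := finite_of_subsingleton
    haveI : Module.Finite ℂ ((⊤ : Submodule ℂ X) ⧸ LinearMap.range (W : (⊤ : Submodule ℂ X) →ₗ[ℂ] (⊤ : Submodule ℂ X))) := finite_of_subsingleton
    refine ⟨?_, ?_, ?_, ?_⟩
    · infer_instance
    · rw [hrange, Submodule.top_coe]; exact isClosed_univ
    · infer_instance
    · rw [Module.finrank_zero_of_subsingleton, Module.finrank_zero_of_subsingleton]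
  · -- quasinilpotent on ⊥
    intro l hl
    exfalso
    haveI : Subsingleton ((⊥ : Submodule ℂ X) →L[ℂ] (⊥ : Submodule ℂ X)) :=
      ⟨fun f g => ContinuousLinearMap.ext fun x => Subsingleton.elim _ _⟩
    exact (spectrum.mem_iff.mp hl) (isUnit_of_subsingleton _)

end Main

section MCsec

variable {X Y : Type*} [NormedAddCommGroup X] [NormedSpace ℂ X]
  [NormedAddCommGroup Y] [NormedSpace ℂ Y]

lemma MC_apply (A : X →L[ℂ] X) (B : Y →L[ℂ] Y) (C : Y →L[ℂ] X) (z : X × Y) :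
    MC A B C z = (A z.1 + C z.2, B z.2) := rfl

lemma MC_sub_smul (A : X →L[ℂ] X) (B : Y →L[ℂ] Y) (C : Y →L[ℂ] X) (μ : ℂ) :
    MC A B C - μ • 1 = MC (A - μ • 1) (B - μ • 1) C := by
  refine ContinuousLinearMap.ext fun z => Prod.ext ?_ ?_ <;>
    simp [MC_apply, ContinuousLinearMap.sub_apply, ContinuousLinearMap.smul_apply,
      ContinuousLinearMap.one_apply, Prod.smul_fst, Prod.smul_snd] <;> abel

lemma spectrum_MC_subset [CompleteSpace X] [CompleteSpace Y]
    (A : X →L[ℂ] X) (B : Y →L[ℂ] Y) (C : Y →L[ℂ] X) :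
    spectrum ℂ (MC A B C) ⊆ spectrum ℂ A ∪ spectrum ℂ B := by
  intro μ hμ
  by_contra hc
  rw [Set.mem_union, not_or] at hc
  obtain ⟨hA, hB⟩ := hc
  obtain ⟨A', hA1, hA2⟩ := isUnit_iff_exists.mp ((isUnit_sub_smul_iff A μ).mpr hA)
  obtain ⟨B', hB1, hB2⟩ := isUnit_iff_exists.mp ((isUnit_sub_smul_iff B μ).mpr hB)
  have e1 : ∀ w, (A - μ • 1) (A' w) = w := fun w => by
    rw [← ContinuousLinearMap.mul_apply, hA1, ContinuousLinearMap.one_apply]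
  have e2 : ∀ w, A' ((A - μ • 1) w) = w := fun w => by
    rw [← ContinuousLinearMap.mul_apply, hA2, ContinuousLinearMap.one_apply]
  have e3 : ∀ w, (B - μ • 1) (B' w) = w := fun w => by
    rw [← ContinuousLinearMap.mul_apply, hB1, ContinuousLinearMap.one_apply]
  have e4 : ∀ w, B' ((B - μ • 1) w) = w := fun w => by
    rw [← ContinuousLinearMap.mul_apply, hB2, ContinuousLinearMap.one_apply]
  have e1' : ∀ w, A (A' w) = w + μ • A' w := fun w => by
    have hh := e1 w
    simp only [ContinuousLinearMap.sub_apply, ContinuousLinearMap.smul_apply,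
      ContinuousLinearMap.one_apply] at hh
    rwa [sub_eq_iff_eq_add] at hh
  have e2' : ∀ w, A' (A w) = w + μ • A' w := fun w => by
    have hh := e2 w
    simp only [ContinuousLinearMap.sub_apply, ContinuousLinearMap.smul_apply,
      ContinuousLinearMap.one_apply, map_sub, map_smul] at hh
    rwa [sub_eq_iff_eq_add] at hh
  have e3' : ∀ w, B (B' w) = w + μ • B' w := fun w => by
    have hh := e3 w
    simp only [ContinuousLinearMap.sub_apply, ContinuousLinearMap.smul_apply,
      ContinuousLinearMap.one_apply] at hh
    rwa [sub_eq_iff_eq_add] at hh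
  have e4' : ∀ w, B' (B w) = w + μ • B' w := fun w => by
    have hh := e4 w
    simp only [ContinuousLinearMap.sub_apply, ContinuousLinearMap.smul_apply,
      ContinuousLinearMap.one_apply, map_sub, map_smul] at hh
    rwa [sub_eq_iff_eq_add] at hh
  set N := MC A' B' (-(A'.comp (C.comp B'))) with hN
  have hUnit : IsUnit (MC A B C - μ • 1) := by
    rw [MC_sub_smul]
    refine isUnit_iff_exists.mpr ⟨N, ?_, ?_⟩
    · refine ContinuousLinearMap.ext fun z => Prod.ext ?_ ?_ <;>
        simp only [hN, MC_apply, ContinuousLinearMap.mul_apply, ContinuousLinearMap.one_apply,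
          ContinuousLinearMap.sub_apply, ContinuousLinearMap.smul_apply,
          ContinuousLinearMap.comp_apply, ContinuousLinearMap.neg_apply, map_add, map_sub,
          map_neg, map_smul, smul_add, smul_sub, smul_neg, neg_smul, neg_neg, e1', e3'] <;> module
    · refine ContinuousLinearMap.ext fun z => Prod.ext ?_ ?_ <;>
        simp only [hN, MC_apply, ContinuousLinearMap.mul_apply, ContinuousLinearMap.one_apply,
          ContinuousLinearMap.sub_apply, ContinuousLinearMap.smul_apply,
          ContinuousLinearMap.comp_apply, ContinuousLinearMap.neg_apply, map_add, map_sub,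
          map_neg, map_smul, smul_add, smul_sub, smul_neg, neg_smul, neg_neg, e2', e4'] <;> module
  exact ((isUnit_sub_smul_iff _ μ).mp hUnit) hμ

lemma spectrum_MC_eq [CompleteSpace X] [CompleteSpace Y]
    (A : X →L[ℂ] X) (B : Y →L[ℂ] Y) (C : Y →L[ℂ] X)
    (h : pBWSpectrum (MC A B C) = pBWSpectrum A ∪ pBWSpectrum B) :
    spectrum ℂ (MC A B C) = spectrum ℂ A ∪ spectrum ℂ B := by
  refine Set.Subset.antisymm (spectrum_MC_subset A B C) ?_
  intro μ hμ
  by_contra hM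
  obtain ⟨S, hS1, hS2⟩ := isUnit_iff_exists.mp ((isUnit_sub_smul_iff _ μ).mpr hM)
  set M := MC A B C - μ • 1 with hMdef
  have e1 : ∀ w, M (S w) = w := fun w => by
    rw [← ContinuousLinearMap.mul_apply, hS1, ContinuousLinearMap.one_apply]
  have e2 : ∀ w, S (M w) = w := fun w => by
    rw [← ContinuousLinearMap.mul_apply, hS2, ContinuousLinearMap.one_apply]
  have hMbij : Function.Bijective M :=
    ⟨fun a b hab => by rw [← e2 a, ← e2 b, hab], fun w => ⟨S w, e1 w⟩⟩
  have hpBW : IsPseudoBWeyl M := isPseudoBWeyl_of_bijective M hMbij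
  have hμpBW : μ ∉ pBWSpectrum (MC A B C) := fun hc => hc hpBW
  rw [h, Set.mem_union, not_or] at hμpBW
  obtain ⟨hApBW, hBpBW⟩ := hμpBW
  simp only [pBWSpectrum, Set.mem_setOf_eq, not_not] at hApBW hBpBW
  -- A - μ•1 is bounded below
  have hbdd : ∀ x : X, (‖S‖ + 1)⁻¹ * ‖x‖ ≤ ‖(A - μ • 1) x‖ := by
    intro x
    have hx0 : M (x, (0:Y)) = ((A - μ • 1) x, (0:Y)) := by
      rw [hMdef, MC_sub_smul]
      simp [MC_apply]
    have h1 : ‖x‖ ≤ ‖S‖ * ‖(A - μ • 1) x‖ := by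
      calc ‖x‖ = ‖(S (M (x, (0:Y)))).1‖ := by rw [e2]
        _ ≤ ‖S (M (x, (0:Y)))‖ := norm_fst_le _
        _ ≤ ‖S‖ * ‖M (x, (0:Y))‖ := S.le_opNorm _
        _ = ‖S‖ * ‖(A - μ • 1) x‖ := by
            rw [hx0, Prod.norm_def]
            simp [max_eq_left (norm_nonneg _)]
    rw [inv_mul_le_iff₀ (by positivity)]
    nlinarith [norm_nonneg ((A - μ • 1) x)]
  have hAbij : Function.Bijective ⇑(A - μ • 1) :=
    bijective_of_pseudoBWeyl_bddBelow _ hApBW (by positivity) hbdd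
  -- B - μ•1 is surjective
  have hBsurj : Function.Surjective ⇑(B - μ • 1) := by
    intro y
    refine ⟨(S ((0:X), y)).2, ?_⟩
    have h2 : (M (S ((0:X), y))).2 = y := by rw [e1]
    rw [hMdef, MC_sub_smul] at h2
    simpa [MC_apply] using h2
  have hBbij : Function.Bijective ⇑(B - μ • 1) :=
    bijective_of_pseudoBWeyl_surjective _ hBpBW hBsurj
  rw [Set.mem_union] at hμ
  rcases hμ with hμ | hμ
  · exact (isUnit_sub_smul_iff A μ).mp (isUnit_of_bijective _ hAbij) hμ
  · exact (isUnit_sub_smul_iff B μ).mp (isUnit_of_bijective _ hBbij) hμ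

end MCsec

end PBW

/-- if `σ_pBW(M_C) = σ_pBW(A) ∪ σ_pBW(B)` then
`σ_gD(M_C) = σ_gD(A) ∪ σ_gD(B)`. -/
theorem stmt13 {X Y : Type*} [NormedAddCommGroup X] [NormedSpace ℂ X] [CompleteSpace X]
    [NormedAddCommGroup Y] [NormedSpace ℂ Y] [CompleteSpace Y]
    (A : X →L[ℂ] X) (B : Y →L[ℂ] Y) (C : Y →L[ℂ] X)
    (h : PBW.pBWSpectrum (PBW.MC A B C) = PBW.pBWSpectrum A ∪ PBW.pBWSpectrum B) :
    PBW.gDSpectrum (PBW.MC A B C) = PBW.gDSpectrum A ∪ PBW.gDSpectrum B := by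
  have hspec := PBW.spectrum_MC_eq A B C h
  unfold PBW.gDSpectrum
  rw [hspec]
  ext l
  simp only [Set.mem_setOf_eq, Set.mem_union]
  rw [← Filter.sup_principal, accPt_sup]
end
end

section
/- Let A ∈ L(X), B ∈ L(Y), C ∈ L(Y,X). Then σ(M_C) = σ(A) ∪ σ(B) if and only if σ_gD(M_C) = σ_gD(A) ∪ σ_gD(B). -/
open Filter Set ContinuousLinearMap

noncomputable section

section Helpers

open Topology Metric

variable {Z : Type*} [NormedAddCommGroup Z] [NormedSpace ℂ Z]

private lemma unit_inv_apply (u : (Z →L[ℂ] Z)ˣ) (z : Z) :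
    (↑u⁻¹ : Z →L[ℂ] Z) ((u : Z →L[ℂ] Z) z) = z := by
  have h : ((↑u⁻¹ : Z →L[ℂ] Z) * (u : Z →L[ℂ] Z)) z = (1 : Z →L[ℂ] Z) z := by rw [u.inv_mul]
  rwa [ContinuousLinearMap.mul_apply, ContinuousLinearMap.one_apply] at h

private lemma unit_apply_inv (u : (Z →L[ℂ] Z)ˣ) (z : Z) :
    (u : Z →L[ℂ] Z) ((↑u⁻¹ : Z →L[ℂ] Z) z) = z := by
  have h : ((u : Z →L[ℂ] Z) * (↑u⁻¹ : Z →L[ℂ] Z)) z = (1 : Z →L[ℂ] Z) z := by rw [u.mul_inv]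
  rwa [ContinuousLinearMap.mul_apply, ContinuousLinearMap.one_apply] at h

private lemma algebraMap_sub_apply (l : ℂ) (A : Z →L[ℂ] Z) (x : Z) :
    (algebraMap ℂ (Z →L[ℂ] Z) l - A) x = l • x - A x := by
  simp [Algebra.algebraMap_eq_smul_one]

/-- A bounded-below operator close to an invertible operator is invertible. -/
private lemma isUnit_of_near [CompleteSpace Z] {T S : Z →L[ℂ] Z} {c : ℝ} (hc : 0 < c)
    (hbb : ∀ x, c * ‖x‖ ≤ ‖T x‖) (hS : IsUnit S) (hd : ‖T - S‖ < c / 2) : IsUnit T := by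
  obtain ⟨u, rfl⟩ := hS
  set S : Z →L[ℂ] Z := (u : Z →L[ℂ] Z) with hSdef
  have hub : ∀ x, (c / 2) * ‖x‖ ≤ ‖S x‖ := by
    intro x
    have h1 : ‖(T - S) x‖ ≤ (c / 2) * ‖x‖ := by
      calc ‖(T - S) x‖ ≤ ‖T - S‖ * ‖x‖ := (T - S).le_opNorm x
        _ ≤ (c / 2) * ‖x‖ := mul_le_mul_of_nonneg_right hd.le (norm_nonneg x)
    have h2 : ‖T x‖ - ‖S x‖ ≤ ‖T x - S x‖ := norm_sub_norm_le _ _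
    have h3 : (T - S) x = T x - S x := by simp
    rw [h3] at h1
    have h4 := hbb x
    linarith
  have hinv : ∀ y, ‖(↑u⁻¹ : Z →L[ℂ] Z) y‖ ≤ (c / 2)⁻¹ * ‖y‖ := by
    intro y
    have h1 := hub ((↑u⁻¹ : Z →L[ℂ] Z) y)
    rw [unit_apply_inv] at h1
    have hc2 : (0:ℝ) < c / 2 := by linarith
    calc ‖(↑u⁻¹ : Z →L[ℂ] Z) y‖ = (c / 2)⁻¹ * ((c / 2) * ‖(↑u⁻¹ : Z →L[ℂ] Z) y‖) := by
          rw [← mul_assoc, inv_mul_cancel₀ hc2.ne', one_mul]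
      _ ≤ (c / 2)⁻¹ * ‖y‖ := by
          apply mul_le_mul_of_nonneg_left h1 (inv_nonneg.2 hc2.le)
  set W : Z →L[ℂ] Z := (↑u⁻¹ : Z →L[ℂ] Z) * (T - S) with hW
  have hWnorm : ‖W‖ < 1 := by
    have hc2 : (0:ℝ) < c / 2 := by linarith
    have hb : ‖W‖ ≤ (c / 2)⁻¹ * ‖T - S‖ := by
      apply ContinuousLinearMap.opNorm_le_bound _
        (mul_nonneg (inv_nonneg.2 hc2.le) (norm_nonneg _))
      intro x
      calc ‖W x‖ = ‖(↑u⁻¹ : Z →L[ℂ] Z) ((T - S) x)‖ := by rw [hW, ContinuousLinearMap.mul_apply]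
        _ ≤ (c / 2)⁻¹ * ‖(T - S) x‖ := hinv _
        _ ≤ (c / 2)⁻¹ * (‖T - S‖ * ‖x‖) := by
            apply mul_le_mul_of_nonneg_left ((T - S).le_opNorm x) (inv_nonneg.2 hc2.le)
        _ = (c / 2)⁻¹ * ‖T - S‖ * ‖x‖ := by ring
    have : (c / 2)⁻¹ * ‖T - S‖ < 1 := by
      rw [inv_mul_lt_iff₀ hc2, mul_one]
      exact hd
    linarith
  have hunit : IsUnit ((1 : Z →L[ℂ] Z) + W) := by
    have : IsUnit ((1 : Z →L[ℂ] Z) - (-W)) :=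
      isUnit_one_sub_of_norm_lt_one (by simpa using hWnorm)
    simpa [sub_neg_eq_add] using this
  have hT : T = S * ((1 : Z →L[ℂ] Z) + W) := by
    rw [hW, mul_add, mul_one, ← mul_assoc]
    rw [hSdef, u.mul_inv, one_mul]
    abel
  rw [hT]
  exact u.isUnit.mul hunit

private lemma accPt_mem_of_isClosed {s : Set ℂ} {x : ℂ} (hs : IsClosed s)
    (h : AccPt x (𝓟 s)) : x ∈ s := by
  have h1 : ClusterPt x (𝓟 s) := AccPt.clusterPt h
  have := mem_closure_iff_clusterPt.2 h1
  rwa [hs.closure_eq] at this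

end Helpers

section MCHelpers

open ContinuousLinearMap

variable {X Y : Type*} [NormedAddCommGroup X] [NormedSpace ℂ X]
  [NormedAddCommGroup Y] [NormedSpace ℂ Y]

private lemma MCsub_apply (A : X →L[ℂ] X) (B : Y →L[ℂ] Y) (C : Y →L[ℂ] X) (l : ℂ)
    (p : X × Y) :
    (algebraMap ℂ ((X × Y) →L[ℂ] (X × Y)) l - PBW.MC A B C) p =
      ((algebraMap ℂ (X →L[ℂ] X) l - A) p.1 - C p.2,
        (algebraMap ℂ (Y →L[ℂ] Y) l - B) p.2) := by
  obtain ⟨x, y⟩ := p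
  simp only [PBW.MC, Algebra.algebraMap_eq_smul_one, ContinuousLinearMap.sub_apply,
    ContinuousLinearMap.smul_apply, ContinuousLinearMap.one_apply, prod_apply,
    ContinuousLinearMap.add_apply, ContinuousLinearMap.comp_apply, coe_fst', coe_snd',
    Prod.smul_mk]
  refine Prod.ext ?_ ?_ <;> simp <;> abel

private lemma unit_B_of_unit_A [CompleteSpace X] [CompleteSpace Y]
    (A : X →L[ℂ] X) (B : Y →L[ℂ] Y) (C : Y →L[ℂ] X) (l : ℂ)
    (hM : IsUnit (algebraMap ℂ ((X × Y) →L[ℂ] (X × Y)) l - PBW.MC A B C))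
    (hA : IsUnit (algebraMap ℂ (X →L[ℂ] X) l - A)) :
    IsUnit (algebraMap ℂ (Y →L[ℂ] Y) l - B) := by
  obtain ⟨u, hu⟩ := hM
  obtain ⟨v, hv⟩ := hA
  have cv1 : ∀ z, (algebraMap ℂ (X →L[ℂ] X) l - A) ((↑v⁻¹ : X →L[ℂ] X) z) = z := fun z => by
    rw [← hv]; exact unit_apply_inv v z
  set S : Y →L[ℂ] Y :=
    (ContinuousLinearMap.snd ℂ X Y).comp
      ((↑u⁻¹ : (X × Y) →L[ℂ] (X × Y)).comp (ContinuousLinearMap.inr ℂ X Y)) with hS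
  have h1 : (algebraMap ℂ (Y →L[ℂ] Y) l - B) * S = 1 := by
    refine ContinuousLinearMap.ext fun y => ?_
    have h := unit_apply_inv u ((0 : X), y)
    rw [hu, MCsub_apply] at h
    have h2 := congrArg Prod.snd h
    simpa [hS, ContinuousLinearMap.mul_apply] using h2
  have h2 : S * (algebraMap ℂ (Y →L[ℂ] Y) l - B) = 1 := by
    refine ContinuousLinearMap.ext fun y => ?_
    have key : (algebraMap ℂ ((X × Y) →L[ℂ] (X × Y)) l - PBW.MC A B C)
        (((↑v⁻¹ : X →L[ℂ] X) (C y)), y)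
          = ((0 : X), (algebraMap ℂ (Y →L[ℂ] Y) l - B) y) := by
      rw [MCsub_apply]
      refine Prod.ext ?_ rfl
      simp [cv1]
    have key2 := congrArg (fun p => (↑u⁻¹ : (X × Y) →L[ℂ] (X × Y)) p) key
    rw [← hu] at key2
    rw [unit_inv_apply] at key2
    have h3 := congrArg Prod.snd key2
    simpa [hS, ContinuousLinearMap.mul_apply] using h3.symm
  exact ⟨⟨_, S, h1, h2⟩, rfl⟩

private lemma spectrum_MC_subset [CompleteSpace X] [CompleteSpace Y]
    (A : X →L[ℂ] X) (B : Y →L[ℂ] Y) (C : Y →L[ℂ] X) :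
    spectrum ℂ (PBW.MC A B C) ⊆ spectrum ℂ A ∪ spectrum ℂ B := by
  intro l hl
  by_contra hn
  simp only [Set.mem_union, not_or, spectrum.notMem_iff] at hn
  obtain ⟨hA, hB⟩ := hn
  obtain ⟨v, hv⟩ := hA
  obtain ⟨w, hw⟩ := hB
  rw [spectrum.mem_iff] at hl
  apply hl
  have cv1 : ∀ z, (algebraMap ℂ (X →L[ℂ] X) l - A) ((↑v⁻¹ : X →L[ℂ] X) z) = z := fun z => by
    rw [← hv]; exact unit_apply_inv v z
  have cv2 : ∀ z, (↑v⁻¹ : X →L[ℂ] X) ((algebraMap ℂ (X →L[ℂ] X) l - A) z) = z := fun z => by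
    rw [← hv]; exact unit_inv_apply v z
  have cw1 : ∀ z, (algebraMap ℂ (Y →L[ℂ] Y) l - B) ((↑w⁻¹ : Y →L[ℂ] Y) z) = z := fun z => by
    rw [← hw]; exact unit_apply_inv w z
  have cw2 : ∀ z, (↑w⁻¹ : Y →L[ℂ] Y) ((algebraMap ℂ (Y →L[ℂ] Y) l - B) z) = z := fun z => by
    rw [← hw]; exact unit_inv_apply w z
  set N : (X × Y) →L[ℂ] (X × Y) :=
    (((↑v⁻¹ : X →L[ℂ] X).comp (ContinuousLinearMap.fst ℂ X Y)) +
      (((↑v⁻¹ : X →L[ℂ] X).comp (C.comp (↑w⁻¹ : Y →L[ℂ] Y))).comp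
        (ContinuousLinearMap.snd ℂ X Y))).prod
      ((↑w⁻¹ : Y →L[ℂ] Y).comp (ContinuousLinearMap.snd ℂ X Y)) with hN
  have h1 : (algebraMap ℂ ((X × Y) →L[ℂ] (X × Y)) l - PBW.MC A B C) * N = 1 := by
    refine ContinuousLinearMap.ext fun p => ?_
    obtain ⟨x, y⟩ := p
    rw [ContinuousLinearMap.mul_apply, ContinuousLinearMap.one_apply]
    have hNapp : N (x, y) = ((↑v⁻¹ : X →L[ℂ] X) x +
        (↑v⁻¹ : X →L[ℂ] X) (C ((↑w⁻¹ : Y →L[ℂ] Y) y)), (↑w⁻¹ : Y →L[ℂ] Y) y) := by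
      simp [hN]
    rw [hNapp, MCsub_apply]
    refine Prod.ext ?_ ?_
    · simp only [map_add, cv1]
      abel
    · simpa using cw1 y
  have h2 : N * (algebraMap ℂ ((X × Y) →L[ℂ] (X × Y)) l - PBW.MC A B C) = 1 := by
    refine ContinuousLinearMap.ext fun p => ?_
    obtain ⟨x, y⟩ := p
    rw [ContinuousLinearMap.mul_apply, ContinuousLinearMap.one_apply, MCsub_apply]
    have hNapp : ∀ a b, N (a, b) = ((↑v⁻¹ : X →L[ℂ] X) a +
        (↑v⁻¹ : X →L[ℂ] X) (C ((↑w⁻¹ : Y →L[ℂ] Y) b)), (↑w⁻¹ : Y →L[ℂ] Y) b) := by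
      intro a b; simp [hN]
    rw [hNapp]
    refine Prod.ext ?_ ?_
    · simp only [cw2, map_sub, cv2]
      abel
    · simpa using cw2 y
  exact ⟨⟨_, N, h1, h2⟩, rfl⟩

end MCHelpers

open Topology Metric

set_option maxHeartbeats 2000000 in
/-- `σ(M_C) = σ(A) ∪ σ(B)` iff `σ_gD(M_C) = σ_gD(A) ∪ σ_gD(B)`. -/
theorem stmt14 {X Y : Type*} [NormedAddCommGroup X] [NormedSpace ℂ X] [CompleteSpace X]
    [NormedAddCommGroup Y] [NormedSpace ℂ Y] [CompleteSpace Y]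
    (A : X →L[ℂ] X) (B : Y →L[ℂ] Y) (C : Y →L[ℂ] X) :
    spectrum ℂ (PBW.MC A B C) = spectrum ℂ A ∪ spectrum ℂ B ↔
      PBW.gDSpectrum (PBW.MC A B C) = PBW.gDSpectrum A ∪ PBW.gDSpectrum B := by
  constructor
  · intro h
    ext l
    simp only [PBW.gDSpectrum, Set.mem_setOf_eq, Set.mem_union, h, ← Filter.sup_principal,
      accPt_sup]
  · intro hgd
    refine Set.Subset.antisymm (spectrum_MC_subset A B C) ?_
    intro l hl
    by_contra hMl
    obtain ⟨u, hu⟩ := spectrum.notMem_iff.mp hMl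
    -- l ∈ σ(A)
    have hlA : l ∈ spectrum ℂ A := by
      rcases hl with h | h
      · exact h
      · rw [spectrum.mem_iff]
        intro hA
        exact spectrum.mem_iff.mp h (unit_B_of_unit_A A B C l ⟨u, hu⟩ hA)
    -- X is nontrivial
    obtain ⟨x₀, hx₀⟩ : ∃ x : X, x ≠ 0 := by
      by_contra hX
      push_neg at hX
      haveI : Subsingleton X := ⟨fun a b => by rw [hX a, hX b]⟩
      haveI : Subsingleton (X →L[ℂ] X) :=
        ⟨fun f g => ContinuousLinearMap.ext fun x => Subsingleton.elim _ _⟩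
      exact spectrum.mem_iff.mp hlA (isUnit_of_subsingleton _)
    haveI : Nontrivial X := ⟨⟨x₀, 0, hx₀⟩⟩
    have hui : (↑u⁻¹ : (X × Y) →L[ℂ] (X × Y)) ≠ 0 := by
      intro h0
      have h1 := unit_inv_apply u ((x₀, 0) : X × Y)
      rw [h0] at h1
      simp only [ContinuousLinearMap.zero_apply] at h1
      exact hx₀ (congrArg Prod.fst h1.symm)
    have hpos : 0 < ‖(↑u⁻¹ : (X × Y) →L[ℂ] (X × Y))‖ :=
      (norm_nonneg _).lt_of_ne fun h =>
        hui ((ContinuousLinearMap.opNorm_zero_iff _).mp h.symm)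
    set c : ℝ := ‖(↑u⁻¹ : (X × Y) →L[ℂ] (X × Y))‖⁻¹ with hc
    have hcpos : 0 < c := inv_pos.2 hpos
    -- A - l is bounded below by c
    have hbb : ∀ x : X, c * ‖x‖ ≤ ‖(algebraMap ℂ (X →L[ℂ] X) l - A) x‖ := by
      intro x
      have h1 : (algebraMap ℂ ((X × Y) →L[ℂ] (X × Y)) l - PBW.MC A B C) ((x, 0) : X × Y)
          = (((algebraMap ℂ (X →L[ℂ] X) l - A) x, 0) : X × Y) := by
        rw [MCsub_apply]
        simp
      have h2 : ‖((x, (0 : Y)) : X × Y)‖ = ‖x‖ := by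
        simp [Prod.norm_def]
      have h3 : ‖(((algebraMap ℂ (X →L[ℂ] X) l - A) x, (0 : Y)) : X × Y)‖
          = ‖(algebraMap ℂ (X →L[ℂ] X) l - A) x‖ := by
        simp [Prod.norm_def]
      have h4 : (↑u⁻¹ : (X × Y) →L[ℂ] (X × Y))
          ((algebraMap ℂ ((X × Y) →L[ℂ] (X × Y)) l - PBW.MC A B C) ((x, 0) : X × Y))
          = ((x, 0) : X × Y) := by
        rw [← hu]; exact unit_inv_apply u _
      have h5 : ‖x‖ ≤ ‖(↑u⁻¹ : (X × Y) →L[ℂ] (X × Y))‖ *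
          ‖(algebraMap ℂ (X →L[ℂ] X) l - A) x‖ := by
        calc ‖x‖ = ‖((x, (0 : Y)) : X × Y)‖ := h2.symm
          _ = ‖(↑u⁻¹ : (X × Y) →L[ℂ] (X × Y))
              ((algebraMap ℂ ((X × Y) →L[ℂ] (X × Y)) l - PBW.MC A B C) ((x, 0) : X × Y))‖ := by
              rw [h4]
          _ ≤ ‖(↑u⁻¹ : (X × Y) →L[ℂ] (X × Y))‖ *
              ‖(algebraMap ℂ ((X × Y) →L[ℂ] (X × Y)) l - PBW.MC A B C) ((x, 0) : X × Y)‖ :=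
              ContinuousLinearMap.le_opNorm _ _
          _ = ‖(↑u⁻¹ : (X × Y) →L[ℂ] (X × Y))‖ *
              ‖(algebraMap ℂ (X →L[ℂ] X) l - A) x‖ := by rw [h1, h3]
      calc c * ‖x‖ ≤ c * (‖(↑u⁻¹ : (X × Y) →L[ℂ] (X × Y))‖ *
            ‖(algebraMap ℂ (X →L[ℂ] X) l - A) x‖) :=
          mul_le_mul_of_nonneg_left h5 hcpos.le
        _ = ‖(algebraMap ℂ (X →L[ℂ] X) l - A) x‖ := by
            rw [hc, ← mul_assoc, inv_mul_cancel₀ hpos.ne', one_mul]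
    -- l is an accumulation point of σ(A)
    have hgA : AccPt l (𝓟 (spectrum ℂ A)) := by
      by_contra hacc
      rw [AccPt, Filter.not_neBot, Filter.inf_principal_eq_bot] at hacc
      have hball : Metric.ball l (c / 2) ∈ 𝓝[≠] l :=
        nhdsWithin_le_nhds (Metric.ball_mem_nhds _ (by linarith))
      have hmem : (spectrum ℂ A)ᶜ ∩ Metric.ball l (c / 2) ∈ 𝓝[≠] l :=
        Filter.inter_mem hacc hball
      obtain ⟨μ, hμc, hμball, hμne⟩ :
          ∃ μ, μ ∈ (spectrum ℂ A)ᶜ ∧ μ ∈ Metric.ball l (c / 2) ∧ μ ∈ ({l}ᶜ : Set ℂ) := by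
        have := Filter.inter_mem hmem (self_mem_nhdsWithin (s := ({l}ᶜ : Set ℂ)) (a := l))
        obtain ⟨μ, hμ⟩ := Filter.nonempty_of_mem this
        exact ⟨μ, hμ.1.1, hμ.1.2, hμ.2⟩
      have hμA : IsUnit (algebraMap ℂ (X →L[ℂ] X) μ - A) := spectrum.notMem_iff.mp hμc
      have hdiff : (algebraMap ℂ (X →L[ℂ] X) l - A) - (algebraMap ℂ (X →L[ℂ] X) μ - A)
          = algebraMap ℂ (X →L[ℂ] X) (l - μ) := by
        rw [map_sub]
        abel
      have hnorm : ‖(algebraMap ℂ (X →L[ℂ] X) l - A) - (algebraMap ℂ (X →L[ℂ] X) μ - A)‖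
          < c / 2 := by
        rw [hdiff]
        calc ‖algebraMap ℂ (X →L[ℂ] X) (l - μ)‖ = ‖l - μ‖ := norm_algebraMap' _ _
          _ = dist μ l := by rw [dist_comm, dist_eq_norm]
          _ < c / 2 := Metric.mem_ball.mp hμball
      exact spectrum.mem_iff.mp hlA (isUnit_of_near hcpos hbb hμA hnorm)
    -- conclude
    have hmemgd : l ∈ PBW.gDSpectrum (PBW.MC A B C) := by
      rw [hgd]
      exact Or.inl hgA
    have : l ∈ spectrum ℂ (PBW.MC A B C) :=
      accPt_mem_of_isClosed (spectrum.isClosed _) hmemgd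
    exact hMl this
end
end

section
/- Let A ∈ L(X), B ∈ L(Y). If σ(A) = σ_l(A) (the spectrum of A equals its left spectrum) or σ(B) = σ_r(B) (the spectrum of B equals its right spectrum), then for every C ∈ L(Y,X), σ_gD(M_C) = σ_gD(A) ∪ σ_gD(B). -/
open Filter Set ContinuousLinearMap

noncomputable section

namespace Stmt15Aux

variable {X Y : Type*} [NormedAddCommGroup X] [NormedSpace ℂ X] [CompleteSpace X]
  [NormedAddCommGroup Y] [NormedSpace ℂ Y] [CompleteSpace Y]

omit [CompleteSpace X] [CompleteSpace Y] in
@[simp] lemma MC_apply (A : X →L[ℂ] X) (B : Y →L[ℂ] Y) (C : Y →L[ℂ] X) (p : X × Y) :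
    PBW.MC A B C p = (A p.1 + C p.2, B p.2) := rfl

lemma isUnit_MC_of (A : X →L[ℂ] X) (B : Y →L[ℂ] Y) (C : Y →L[ℂ] X)
    (hA : IsUnit A) (hB : IsUnit B) : IsUnit (PBW.MC A B C) := by
  rw [ContinuousLinearMap.isUnit_iff_bijective] at *
  constructor
  · intro p q hpq
    simp only [MC_apply, Prod.mk.injEq] at hpq
    have h2 : p.2 = q.2 := hB.1 hpq.2
    rw [h2] at hpq
    exact Prod.ext (hA.1 (add_right_cancel hpq.1)) h2
  · intro ⟨w, z⟩
    obtain ⟨y, hy⟩ := hB.2 z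
    obtain ⟨x, hx⟩ := hA.2 (w - C y)
    exact ⟨(x, y), by simp [hx, hy]⟩

lemma left_inv_of_isUnit_MC {A : X →L[ℂ] X} {B : Y →L[ℂ] Y} {C : Y →L[ℂ] X}
    (h : IsUnit (PBW.MC A B C)) : ∃ S : X →L[ℂ] X, S * A = 1 := by
  obtain ⟨u, hu⟩ := h
  refine ⟨(ContinuousLinearMap.fst ℂ X Y).comp ((↑u⁻¹ : (X × Y) →L[ℂ] (X × Y)).comp
    (ContinuousLinearMap.inl ℂ X Y)), ?_⟩
  ext x
  have h1 : ((↑u : (X × Y) →L[ℂ] (X × Y)) (x, 0)) = (A x, 0) := by rw [hu]; simp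
  have h2 : (↑u⁻¹ : (X × Y) →L[ℂ] (X × Y)) ((↑u : (X × Y) →L[ℂ] (X × Y)) (x, 0)) = (x, 0) := by
    rw [← ContinuousLinearMap.comp_apply, ← ContinuousLinearMap.mul_def, u.inv_mul]; rfl
  rw [h1] at h2
  simp only [ContinuousLinearMap.mul_apply, ContinuousLinearMap.comp_apply,
    ContinuousLinearMap.inl_apply, ContinuousLinearMap.one_apply,
    ContinuousLinearMap.coe_fst', h2]

lemma right_inv_of_isUnit_MC {A : X →L[ℂ] X} {B : Y →L[ℂ] Y} {C : Y →L[ℂ] X}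
    (h : IsUnit (PBW.MC A B C)) : ∃ S : Y →L[ℂ] Y, B * S = 1 := by
  obtain ⟨u, hu⟩ := h
  refine ⟨(ContinuousLinearMap.snd ℂ X Y).comp ((↑u⁻¹ : (X × Y) →L[ℂ] (X × Y)).comp
    (ContinuousLinearMap.inr ℂ X Y)), ?_⟩
  ext z
  have h2 : ((↑u : (X × Y) →L[ℂ] (X × Y)) ((↑u⁻¹ : (X × Y) →L[ℂ] (X × Y)) (0, z))) = (0, z) := by
    rw [← ContinuousLinearMap.comp_apply, ← ContinuousLinearMap.mul_def, u.mul_inv]; rfl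
  rw [hu] at h2
  have := congrArg Prod.snd h2
  simp only [MC_apply] at this
  simpa using this

lemma isUnit_B_of {A : X →L[ℂ] X} {B : Y →L[ℂ] Y} {C : Y →L[ℂ] X}
    (h : IsUnit (PBW.MC A B C)) (hA : IsUnit A) : IsUnit B := by
  have hinj : Function.Injective (PBW.MC A B C) :=
    (ContinuousLinearMap.isUnit_iff_bijective.mp h).1
  obtain ⟨u, hu⟩ := h
  rw [ContinuousLinearMap.isUnit_iff_bijective] at hA ⊢
  constructor
  · intro y y' hy
    obtain ⟨x, hx⟩ := hA.2 (C y' - C y)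
    have heq : PBW.MC A B C (x, y) = PBW.MC A B C (0, y') := by
      simp only [MC_apply, map_zero, zero_add, hx, hy]
      rw [sub_add_cancel]
    exact (Prod.ext_iff.mp (hinj heq)).2
  · intro z
    refine ⟨((↑u⁻¹ : (X × Y) →L[ℂ] (X × Y)) (0, z)).2, ?_⟩
    have h2 : ((↑u : (X × Y) →L[ℂ] (X × Y)) ((↑u⁻¹ : (X × Y) →L[ℂ] (X × Y)) (0, z))) = (0, z) := by
      rw [← ContinuousLinearMap.comp_apply, ← ContinuousLinearMap.mul_def, u.mul_inv]; rfl
    rw [hu] at h2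
    exact (Prod.ext_iff.mp h2).2

lemma isUnit_A_of {A : X →L[ℂ] X} {B : Y →L[ℂ] Y} {C : Y →L[ℂ] X}
    (h : IsUnit (PBW.MC A B C)) (hB : IsUnit B) : IsUnit A := by
  have hinj : Function.Injective (PBW.MC A B C) :=
    (ContinuousLinearMap.isUnit_iff_bijective.mp h).1
  obtain ⟨u, hu⟩ := h
  rw [ContinuousLinearMap.isUnit_iff_bijective] at hB ⊢
  constructor
  · intro x x' hx
    have heq : PBW.MC A B C (x, 0) = PBW.MC A B C (x', 0) := by simp [hx]
    exact (Prod.ext_iff.mp (hinj heq)).1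
  · intro w
    set p := (↑u⁻¹ : (X × Y) →L[ℂ] (X × Y)) (w, 0) with hp
    have h2 : ((↑u : (X × Y) →L[ℂ] (X × Y)) p) = (w, 0) := by
      rw [hp, ← ContinuousLinearMap.comp_apply, ← ContinuousLinearMap.mul_def, u.mul_inv]; rfl
    rw [hu] at h2
    simp only [MC_apply, Prod.mk.injEq] at h2
    have hp2 : p.2 = 0 := hB.1 (by simp [h2.2])
    have h1 := h2.1
    rw [hp2, map_zero, add_zero] at h1
    exact ⟨p.1, h1⟩

end Stmt15Aux
namespace Stmt15Aux

variable {X Y : Type*} [NormedAddCommGroup X] [NormedSpace ℂ X] [CompleteSpace X]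
  [NormedAddCommGroup Y] [NormedSpace ℂ Y] [CompleteSpace Y]

omit [CompleteSpace X] [CompleteSpace Y] in
lemma smul_one_sub_MC (A : X →L[ℂ] X) (B : Y →L[ℂ] Y) (C : Y →L[ℂ] X) (l : ℂ) :
    l • (1 : (X × Y) →L[ℂ] (X × Y)) - PBW.MC A B C
      = PBW.MC (l • 1 - A) (l • 1 - B) (-C) := by
  ext p <;> simp [MC_apply, Prod.smul_def]

lemma spectrum_MC (A : X →L[ℂ] X) (B : Y →L[ℂ] Y)
    (h : spectrum ℂ A = PBW.leftSpectrum A ∨ spectrum ℂ B = PBW.rightSpectrum B)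
    (C : Y →L[ℂ] X) :
    spectrum ℂ (PBW.MC A B C) = spectrum ℂ A ∪ spectrum ℂ B := by
  ext l
  rw [Set.mem_union]
  simp only [spectrum.mem_iff, Algebra.algebraMap_eq_smul_one]
  rw [smul_one_sub_MC]
  rw [← not_and_or, not_iff_not]
  constructor
  · intro hMC
    rcases h with h | h
    · have hAl : l ∉ spectrum ℂ A := by
        rw [h]
        obtain ⟨S, hS⟩ := left_inv_of_isUnit_MC hMC
        intro hmem
        exact hmem ⟨-S, by rw [(neg_sub (l • 1) A).symm, neg_mul_neg, hS]⟩
      rw [spectrum.notMem_iff, Algebra.algebraMap_eq_smul_one] at hAl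
      exact ⟨hAl, isUnit_B_of hMC hAl⟩
    · have hBl : l ∉ spectrum ℂ B := by
        rw [h]
        obtain ⟨S, hS⟩ := right_inv_of_isUnit_MC hMC
        intro hmem
        exact hmem ⟨-S, by rw [(neg_sub (l • 1) B).symm, neg_mul_neg, hS]⟩
      rw [spectrum.notMem_iff, Algebra.algebraMap_eq_smul_one] at hBl
      exact ⟨isUnit_A_of hMC hBl, hBl⟩
  · rintro ⟨hA, hB⟩
    exact isUnit_MC_of _ _ _ hA hB

end Stmt15Aux

/-- if `σ(A) = σ_l(A)` or `σ(B) = σ_r(B)`, then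
`σ_gD(M_C) = σ_gD(A) ∪ σ_gD(B)` for every `C`. -/
theorem stmt15 {X Y : Type*} [NormedAddCommGroup X] [NormedSpace ℂ X] [CompleteSpace X]
    [NormedAddCommGroup Y] [NormedSpace ℂ Y] [CompleteSpace Y]
    (A : X →L[ℂ] X) (B : Y →L[ℂ] Y)
    (h : spectrum ℂ A = PBW.leftSpectrum A ∨ spectrum ℂ B = PBW.rightSpectrum B) :
    ∀ C : Y →L[ℂ] X,
      PBW.gDSpectrum (PBW.MC A B C) = PBW.gDSpectrum A ∪ PBW.gDSpectrum B := by
  intro C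
  ext l
  simp only [PBW.gDSpectrum, Set.mem_setOf_eq, Set.mem_union]
  rw [Stmt15Aux.spectrum_MC A B h C, ← sup_principal, accPt_sup]
end
end

section
/- Let A ∈ L(X), B ∈ L(Y), C ∈ L(Y,X). If M_C is generalized Drazin invertible, then: (i) 0 is not an accumulation point of the left spectrum of A; (ii) 0 is not an accumulation point of the right spectrum of B; (iii) there exists γ > 0 such that for all 0 < |λ| < γ, codim R(A − λ) = dim N(B − λ). -/
open Filter Set ContinuousLinearMap

noncomputable section

universe u

section Aux

variable {X Y : Type u} [NormedAddCommGroup X] [NormedSpace ℂ X]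
  [NormedAddCommGroup Y] [NormedSpace ℂ Y]

lemma MC_sub_apply (A : X →L[ℂ] X) (B : Y →L[ℂ] Y) (C : Y →L[ℂ] X) (l : ℂ) (p : X × Y) :
    (PBW.MC A B C - l • 1) p = ((A - l • (1 : X →L[ℂ] X)) p.1 + C p.2,
      (B - l • (1 : Y →L[ℂ] Y)) p.2) := by
  simp only [PBW.MC, ContinuousLinearMap.sub_apply, ContinuousLinearMap.smul_apply,
    ContinuousLinearMap.one_apply, ContinuousLinearMap.prod_apply,
    ContinuousLinearMap.add_apply, ContinuousLinearMap.comp_apply,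
    ContinuousLinearMap.coe_fst', ContinuousLinearMap.coe_snd', Prod.smul_mk, Prod.mk_sub_mk,
    Prod.smul_def, Prod.mk.injEq]
  exact ⟨by abel, trivial⟩

lemma aux_unit (A : X →L[ℂ] X) (B : Y →L[ℂ] Y) (C : Y →L[ℂ] X) (l : ℂ)
    (hu : IsUnit (PBW.MC A B C - l • 1)) :
    (∃ S : X →L[ℂ] X, S * (A - l • 1) = 1) ∧
      (∃ S : Y →L[ℂ] Y, (B - l • 1) * S = 1) ∧
      Module.rank ℂ (X ⧸ LinearMap.range ((A - l • (1 : X →L[ℂ] X) : X →L[ℂ] X) : X →ₗ[ℂ] X)) =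
        Module.rank ℂ (LinearMap.ker ((B - l • (1 : Y →L[ℂ] Y) : Y →L[ℂ] Y) : Y →ₗ[ℂ] Y)) := by
  obtain ⟨u, hu⟩ := hu
  set M : (X × Y) →L[ℂ] (X × Y) := PBW.MC A B C - l • 1 with hM
  set S : (X × Y) →L[ℂ] (X × Y) := (↑u⁻¹ : (X × Y) →L[ℂ] (X × Y)) with hSdef
  have hS1 : ∀ p, S (M p) = p := by
    intro p
    have h1 : S * M = 1 := by rw [hSdef, ← hu]; exact u.inv_mul
    calc S (M p) = (S * M) p := rfl
      _ = p := by rw [h1]; rfl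
  have hS2 : ∀ p, M (S p) = p := by
    intro p
    have h1 : M * S = 1 := by rw [hSdef, ← hu]; exact u.mul_inv
    calc M (S p) = (M * S) p := rfl
      _ = p := by rw [h1]; rfl
  have hMinj : Function.Injective M := fun a b hab => by
    rw [← hS1 a, ← hS1 b, hab]
  refine ⟨?_, ?_, ?_⟩
  · refine ⟨(ContinuousLinearMap.fst ℂ X Y).comp (S.comp (ContinuousLinearMap.inl ℂ X Y)), ?_⟩
    ext x
    have h1 : M (x, 0) = ((A - l • 1) x, 0) := by
      rw [hM, MC_sub_apply]; simp
    have h2 := hS1 (x, 0)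
    rw [h1] at h2
    simp only [ContinuousLinearMap.mul_apply, ContinuousLinearMap.one_apply,
      ContinuousLinearMap.comp_apply, ContinuousLinearMap.inl_apply,
      ContinuousLinearMap.coe_fst']
    rw [h2]
  · refine ⟨(ContinuousLinearMap.snd ℂ X Y).comp (S.comp (ContinuousLinearMap.inr ℂ X Y)), ?_⟩
    ext y
    have h2 := hS2 ((0 : X), y)
    have h3 : (M (S (0, y))).2 = y := by rw [h2]
    rw [hM, MC_sub_apply] at h3
    simp only [ContinuousLinearMap.mul_apply, ContinuousLinearMap.one_apply,
      ContinuousLinearMap.comp_apply, ContinuousLinearMap.inr_apply,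
      ContinuousLinearMap.coe_snd']
    exact h3
  · set Al : X →L[ℂ] X := A - l • 1 with hAl
    set Bl : Y →L[ℂ] Y := B - l • 1 with hBl
    let φ : LinearMap.ker (Bl : Y →ₗ[ℂ] Y) →ₗ[ℂ] X ⧸ LinearMap.range (Al : X →ₗ[ℂ] X) :=
      (LinearMap.range (Al : X →ₗ[ℂ] X)).mkQ ∘ₗ (C : Y →ₗ[ℂ] X) ∘ₗ (LinearMap.ker (Bl : Y →ₗ[ℂ] Y)).subtype
    have hφ : ∀ v : LinearMap.ker (Bl : Y →ₗ[ℂ] Y), φ v = (LinearMap.range (Al : X →ₗ[ℂ] X)).mkQ (C v.1) := fun v => rfl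
    have hinj : Function.Injective φ := by
      rw [injective_iff_map_eq_zero]
      intro v hv
      rw [hφ] at hv
      rw [Submodule.mkQ_apply, Submodule.Quotient.mk_eq_zero] at hv
      obtain ⟨w, hw⟩ := hv
      have hv2 : Bl v.1 = 0 := v.2
      have hz : M (-w, v.1) = 0 := by
        rw [hM, MC_sub_apply]
        simp only [← hAl, ← hBl, map_neg, hw, hv2]
        simp
        exact neg_add_eq_zero.mpr hw
      have := hMinj (show M (-w, v.1) = M 0 by rw [hz, map_zero])
      have hv1 : v.1 = 0 := congrArg Prod.snd this
      exact Subtype.ext hv1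
    have hsurj : Function.Surjective φ := by
      intro q
      obtain ⟨x, rfl⟩ := Submodule.mkQ_surjective _ q
      obtain ⟨p, hp⟩ : ∃ p : X × Y, (Al p.1 + C p.2, Bl p.2) = (x, 0) := by
        refine ⟨S (x, 0), ?_⟩
        rw [hAl, hBl, ← MC_sub_apply, ← hM]
        exact hS2 (x, 0)
      have h1 : Al p.1 + C p.2 = x := congrArg Prod.fst hp
      have h2 : p.2 ∈ LinearMap.ker (Bl : Y →ₗ[ℂ] Y) := by
        rw [LinearMap.mem_ker]; exact congrArg Prod.snd hp
      refine ⟨⟨p.2, h2⟩, ?_⟩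
      rw [hφ, Submodule.mkQ_apply, Submodule.mkQ_apply, Submodule.Quotient.eq]
      refine ⟨-p.1, ?_⟩
      show Al (-p.1) = C p.2 - x
      rw [map_neg, ← h1]; abel
    exact ((LinearEquiv.ofBijective φ ⟨hinj, hsurj⟩).rank_eq).symm

end Aux

/-- necessary conditions for generalized Drazin invertibility of `M_C`. -/
theorem stmt16 {X Y : Type u} [NormedAddCommGroup X] [NormedSpace ℂ X] [CompleteSpace X]
    [NormedAddCommGroup Y] [NormedSpace ℂ Y] [CompleteSpace Y]
    (A : X →L[ℂ] X) (B : Y →L[ℂ] Y) (C : Y →L[ℂ] X)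
    (h : ¬ AccPt (0 : ℂ) (𝓟 (spectrum ℂ (PBW.MC A B C)))) :
    (¬ AccPt (0 : ℂ) (𝓟 (PBW.leftSpectrum A))) ∧
      (¬ AccPt (0 : ℂ) (𝓟 (PBW.rightSpectrum B))) ∧
      ∃ γ > (0 : ℝ), ∀ l : ℂ, 0 < ‖l‖ → ‖l‖ < γ →
        Module.rank ℂ (X ⧸ LinearMap.range ((A - l • 1 : X →L[ℂ] X) : X →ₗ[ℂ] X)) =
          Module.rank ℂ (LinearMap.ker ((B - l • 1 : Y →L[ℂ] Y) : Y →ₗ[ℂ] Y)) := by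
  rw [accPt_iff_nhds] at h
  push_neg at h
  obtain ⟨U, hU, hU0⟩ := h
  obtain ⟨γ, hγ, hball⟩ := Metric.mem_nhds_iff.mp hU
  have key : ∀ l : ℂ, 0 < ‖l‖ → ‖l‖ < γ → IsUnit (PBW.MC A B C - l • 1) := by
    intro l h0 hγl
    have hl : l ∈ U := hball (by simpa [Metric.mem_ball, dist_zero_right] using hγl)
    have hns : l ∉ spectrum ℂ (PBW.MC A B C) := by
      intro hs
      have : l = 0 := hU0 l ⟨hl, hs⟩
      rw [this] at h0; simp at h0
    rw [spectrum.notMem_iff] at hns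
    have := hns.neg
    rw [neg_sub] at this
    simpa [Algebra.algebraMap_eq_smul_one] using this
  refine ⟨?_, ?_, ⟨γ, hγ, fun l h0 hγl => (aux_unit A B C l (key l h0 hγl)).2.2⟩⟩
  · rw [accPt_iff_nhds]
    push_neg
    refine ⟨Metric.ball 0 γ, Metric.ball_mem_nhds _ hγ, ?_⟩
    intro y ⟨hy1, hy2⟩
    by_contra hy0
    have h0 : 0 < ‖y‖ := by simpa [norm_pos_iff] using hy0
    have hγy : ‖y‖ < γ := by simpa [Metric.mem_ball, dist_zero_right] using hy1
    exact hy2 ((aux_unit A B C y (key y h0 hγy)).1)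
  · rw [accPt_iff_nhds]
    push_neg
    refine ⟨Metric.ball 0 γ, Metric.ball_mem_nhds _ hγ, ?_⟩
    intro y ⟨hy1, hy2⟩
    by_contra hy0
    have h0 : 0 < ‖y‖ := by simpa [norm_pos_iff] using hy0
    have hγy : ‖y‖ < γ := by simpa [Metric.mem_ball, dist_zero_right] using hy1
    exact hy2 ((aux_unit A B C y (key y h0 hγy)).2.1)
end
end

section
/- Let A ∈ L(X), B ∈ L(Y). For every C ∈ L(Y,X), (σ_gD(A) ∪ σ_gD(B)) \ (σ_rgD(A) ∩ σ_lgD(B)) ⊆ σ_gD(M_C), where σ_lgD(T) = {λ : λ ∈ acc σ_l(T)} is the left generalized Drazin spectrum and σ_rgD(T) = {λ : λ ∈ acc σ_r(T)} is the right generalized Drazin spectrum. -/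
open Filter Set ContinuousLinearMap

noncomputable section

section Stmt17Aux
open PBW

variable {X Y : Type*} [NormedAddCommGroup X] [NormedSpace ℂ X]
  [NormedAddCommGroup Y] [NormedSpace ℂ Y]

lemma MC_apply' (A : X →L[ℂ] X) (B : Y →L[ℂ] Y) (C : Y →L[ℂ] X) (v : X × Y) :
    MC A B C v = (A v.1 + C v.2, B v.2) := rfl

lemma MC_sub_smul (A : X →L[ℂ] X) (B : Y →L[ℂ] Y) (C : Y →L[ℂ] X) (l : ℂ) :
    MC A B C - l • 1 = MC (A - l • 1) (B - l • 1) C := by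
  refine ContinuousLinearMap.ext fun v => ?_
  simp only [ContinuousLinearMap.sub_apply, ContinuousLinearMap.smul_apply,
    ContinuousLinearMap.one_apply, MC_apply']
  refine Prod.ext ?_ ?_
  · simp [Prod.smul_fst]; abel
  · simp [Prod.smul_snd]

lemma unit_of_left_right {Z : Type*} [NormedAddCommGroup Z] [NormedSpace ℂ Z]
    {T L R : Z →L[ℂ] Z} (hL : L * T = 1) (hR : T * R = 1) : IsUnit T := by
  have hLR : L = R := by rw [← mul_one L, ← hR, ← mul_assoc, hL, one_mul]
  exact ⟨⟨T, L, by rw [hLR]; exact hR, hL⟩, rfl⟩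

lemma inv_apply_apply {Z : Type*} [NormedAddCommGroup Z] [NormedSpace ℂ Z]
    {T : Z →L[ℂ] Z} (h : IsUnit T) (z : Z) :
    (↑h.unit⁻¹ : Z →L[ℂ] Z) (T z) = z := by
  have h1 : (↑h.unit⁻¹ * ↑h.unit : Z →L[ℂ] Z) = 1 := h.unit.inv_mul
  rw [h.unit_spec] at h1
  exact ContinuousLinearMap.ext_iff.mp h1 z

lemma apply_inv_apply {Z : Type*} [NormedAddCommGroup Z] [NormedSpace ℂ Z]
    {T : Z →L[ℂ] Z} (h : IsUnit T) (z : Z) :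
    T ((↑h.unit⁻¹ : Z →L[ℂ] Z) z) = z := by
  have h1 : (↑h.unit * ↑h.unit⁻¹ : Z →L[ℂ] Z) = 1 := h.unit.mul_inv
  rw [h.unit_spec] at h1
  exact ContinuousLinearMap.ext_iff.mp h1 z

lemma leftInv_of_MC {A : X →L[ℂ] X} {B : Y →L[ℂ] Y} {C : Y →L[ℂ] X}
    (h : IsUnit (MC A B C)) : ∃ L : X →L[ℂ] X, L * A = 1 := by
  refine ⟨(ContinuousLinearMap.fst ℂ X Y).comp
    (ContinuousLinearMap.comp (show (X × Y) →L[ℂ] (X × Y) from ↑h.unit⁻¹) (ContinuousLinearMap.inl ℂ X Y)), ?_⟩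
  refine ContinuousLinearMap.ext fun x => ?_
  have h2 : MC A B C (x, 0) = (A x, (0 : Y)) := by simp [MC_apply']
  have h3 := inv_apply_apply h (x, 0)
  rw [h2] at h3
  exact congrArg Prod.fst h3

lemma rightInv_of_MC {A : X →L[ℂ] X} {B : Y →L[ℂ] Y} {C : Y →L[ℂ] X}
    (h : IsUnit (MC A B C)) : ∃ R : Y →L[ℂ] Y, B * R = 1 := by
  refine ⟨(ContinuousLinearMap.snd ℂ X Y).comp
    (ContinuousLinearMap.comp (show (X × Y) →L[ℂ] (X × Y) from ↑h.unit⁻¹) (ContinuousLinearMap.inr ℂ X Y)), ?_⟩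
  refine ContinuousLinearMap.ext fun y => ?_
  exact congrArg Prod.snd (apply_inv_apply h ((0 : X), y))

lemma unitB_of_MC {A : X →L[ℂ] X} {B : Y →L[ℂ] Y} {C : Y →L[ℂ] X}
    (h : IsUnit (MC A B C)) (hA : IsUnit A) : IsUnit B := by
  obtain ⟨R, hR⟩ := rightInv_of_MC h
  have hinj : ∀ y : Y, B y = 0 → y = 0 := by
    intro y hy
    set x : X := -((↑hA.unit⁻¹ : X →L[ℂ] X) (C y)) with hx
    have hAx : A x = -(C y) := by
      rw [hx, map_neg, apply_inv_apply hA]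
    have hM : MC A B C (x, y) = 0 := by
      rw [MC_apply', hAx, hy]
      simp
    have h5 := inv_apply_apply h (x, y)
    rw [hM, map_zero] at h5
    exact congrArg Prod.snd h5.symm
  have hRB : R * B = 1 := by
    refine ContinuousLinearMap.ext fun y => ?_
    have h1 : B (R (B y)) = B y :=
      by simpa [ContinuousLinearMap.mul_apply] using ContinuousLinearMap.ext_iff.mp hR (B y)
    have h2 : B (R (B y) - y) = 0 := by rw [map_sub, h1, sub_self]
    have h3 : R (B y) = y := sub_eq_zero.mp (hinj _ h2)
    simpa [ContinuousLinearMap.mul_apply] using h3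
  exact unit_of_left_right hRB hR

lemma unitA_of_MC {A : X →L[ℂ] X} {B : Y →L[ℂ] Y} {C : Y →L[ℂ] X}
    (h : IsUnit (MC A B C)) (hB : IsUnit B) : IsUnit A := by
  obtain ⟨L, hL⟩ := leftInv_of_MC h
  have hBinj : ∀ y : Y, B y = 0 → y = 0 := by
    intro y hy
    have := inv_apply_apply hB y
    rw [hy, map_zero] at this
    exact this.symm
  have hsurj : ∀ x : X, ∃ u : X, A u = x := by
    intro x
    set w := (↑h.unit⁻¹ : (X × Y) →L[ℂ] (X × Y)) (x, 0) with hw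
    have hMw : MC A B C w = (x, 0) := apply_inv_apply h ((x : X), (0 : Y))
    have hw2 : w.2 = 0 := by
      apply hBinj
      have := congrArg Prod.snd hMw
      simpa [MC_apply'] using this
    refine ⟨w.1, ?_⟩
    have := congrArg Prod.fst hMw
    simp only [MC_apply'] at this
    rw [hw2, map_zero, add_zero] at this
    exact this
  have hAL : A * L = 1 := by
    refine ContinuousLinearMap.ext fun x => ?_
    obtain ⟨u, hu⟩ := hsurj x
    have h1 : L (A u) = u := by
      simpa [ContinuousLinearMap.mul_apply] using ContinuousLinearMap.ext_iff.mp hL u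
    simp only [ContinuousLinearMap.mul_apply, ContinuousLinearMap.one_apply]
    rw [← hu, h1]
  exact unit_of_left_right hL hAL

lemma not_mem_spectrum_iff {Z : Type*} [NormedAddCommGroup Z] [NormedSpace ℂ Z]
    (T : Z →L[ℂ] Z) (l : ℂ) :
    l ∉ spectrum ℂ T ↔ IsUnit (T - l • 1) := by
  rw [spectrum.notMem_iff, Algebra.algebraMap_eq_smul_one, ← neg_sub, IsUnit.neg_iff]

end Stmt17Aux

/-- `(σ_gD(A) ∪ σ_gD(B)) \ (σ_rgD(A) ∩ σ_lgD(B)) ⊆ σ_gD(M_C)`. -/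
theorem stmt17 {X Y : Type*} [NormedAddCommGroup X] [NormedSpace ℂ X] [CompleteSpace X]
    [NormedAddCommGroup Y] [NormedSpace ℂ Y] [CompleteSpace Y]
    (A : X →L[ℂ] X) (B : Y →L[ℂ] Y) :
    ∀ C : Y →L[ℂ] X,
      (PBW.gDSpectrum A ∪ PBW.gDSpectrum B) \ (PBW.rgDSpectrum A ∩ PBW.lgDSpectrum B) ⊆
        PBW.gDSpectrum (PBW.MC A B C) := by
  intro C l hl
  rcases hl with ⟨hmem, hnot⟩
  by_contra hMC
  have hev : ∀ᶠ μ in nhds l, μ ≠ l → μ ∉ spectrum ℂ (PBW.MC A B C) := by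
    rw [PBW.gDSpectrum, Set.mem_setOf_eq, accPt_iff_frequently, Filter.not_frequently] at hMC
    exact hMC.mono fun μ h hne hm => h ⟨hne, hm⟩
  have key : ∀ᶠ μ in nhds l, μ ≠ l → μ ∉ spectrum ℂ A ∧ μ ∉ spectrum ℂ B := by
    rcases not_and_or.mp hnot with h | h
    · rw [PBW.rgDSpectrum, Set.mem_setOf_eq, accPt_iff_frequently, Filter.not_frequently] at h
      filter_upwards [hev, h] with μ hM hA hne
      have hMu : IsUnit (PBW.MC A B C - μ • 1) := (not_mem_spectrum_iff _ _).mp (hM hne)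
      rw [MC_sub_smul] at hMu
      obtain ⟨L, hL⟩ := leftInv_of_MC hMu
      have hA' : μ ∉ PBW.rightSpectrum A := fun hm => hA ⟨hne, hm⟩
      have hR : ∃ R, (A - μ • 1) * R = 1 := not_not.mp hA'
      obtain ⟨R, hR⟩ := hR
      have hAu : IsUnit (A - μ • 1) := unit_of_left_right hL hR
      exact ⟨(not_mem_spectrum_iff _ _).mpr hAu,
        (not_mem_spectrum_iff _ _).mpr (unitB_of_MC hMu hAu)⟩
    · rw [PBW.lgDSpectrum, Set.mem_setOf_eq, accPt_iff_frequently, Filter.not_frequently] at h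
      filter_upwards [hev, h] with μ hM hB hne
      have hMu : IsUnit (PBW.MC A B C - μ • 1) := (not_mem_spectrum_iff _ _).mp (hM hne)
      rw [MC_sub_smul] at hMu
      obtain ⟨R, hR⟩ := rightInv_of_MC hMu
      have hB' : μ ∉ PBW.leftSpectrum B := fun hm => hB ⟨hne, hm⟩
      have hLe : ∃ L, L * (B - μ • 1) = 1 := not_not.mp hB'
      obtain ⟨L, hL⟩ := hLe
      have hBu : IsUnit (B - μ • 1) := unit_of_left_right hL hR
      exact ⟨(not_mem_spectrum_iff _ _).mpr (unitA_of_MC hMu hBu),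
        (not_mem_spectrum_iff _ _).mpr hBu⟩
  rcases hmem with h | h
  · rw [PBW.gDSpectrum, Set.mem_setOf_eq, accPt_iff_frequently] at h
    obtain ⟨μ, hfreq, hev'⟩ := (h.and_eventually key).exists
    exact (hev' hfreq.1).1 hfreq.2
  · rw [PBW.gDSpectrum, Set.mem_setOf_eq, accPt_iff_frequently] at h
    obtain ⟨μ, hfreq, hev'⟩ := (h.and_eventually key).exists
    exact (hev' hfreq.1).2 hfreq.2
end
end
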